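/- arXiv:2303.06647 — 8 statements merged into one kernel-verified Lean document; each statement's English description precedes it below -/
import Mathlib

section
/- For fixed positive integers k and m ≥ 2, the sequence C_{k,q}, C_{k,q+1}, ..., C_{k,k} (where q = ⌈k/m⌉) is unimodal: there exists α with q ≤ α ≤ k such that C_{k,q} ≤ ... ≤ C_{k,α} ≥ ... ≥ C_{k,k}. -/
def C (m k ℓ : ℕ) : ℕ :=
  (Finset.univ.filter (fun f : Fin ℓ → Fin m => ∑ i, ((f i : ℕ) + 1) = k)).card

/-- auxiliary: `hatf u t a = u (t - (a+1))` if `a+1 ≤ t`, else `0`. -/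
def hatf (u : ℕ → ℕ) (t a : ℕ) : ℕ := if a + 1 ≤ t then u (t - (a + 1)) else 0

/-- recursive count of tuples in `[1..m]^ℓ` summing to `k`. -/
def D (m : ℕ) : ℕ → ℕ → ℕ
  | 0, k => if k = 0 then 1 else 0
  | ℓ + 1, k => ∑ a ∈ Finset.range m, hatf (D m ℓ) k a

lemma C_zero (m k : ℕ) : C m k 0 = if k = 0 then 1 else 0 := by
  unfold C
  rcases eq_or_ne k 0 with h | h
  · subst h; simp
  · rw [if_neg h]
    rw [Finset.card_eq_zero, Finset.filter_eq_empty_iff]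
    intro f _
    simp [h.symm]

lemma C_succ (m k ℓ : ℕ) :
    C m k (ℓ + 1) = ∑ a ∈ Finset.range m, hatf (fun k' => C m k' ℓ) k a := by
  unfold C
  rw [Finset.card_filter]
  rw [← Equiv.sum_comp (Fin.consEquiv (fun _ : Fin (ℓ+1) => Fin m))
      (fun f => if ∑ i, ((f i : ℕ) + 1) = k then 1 else 0)]
  rw [Fintype.sum_prod_type]
  have h1 : ∀ (c : Fin m) (g : Fin ℓ → Fin m),
      (∑ i, (((Fin.consEquiv (fun _ : Fin (ℓ+1) => Fin m)) (c, g) i : ℕ) + 1))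
        = ((c : ℕ) + 1) + ∑ i, ((g i : ℕ) + 1) := by
    intro c g
    simp [Fin.consEquiv, Fin.sum_univ_succ]
  have h2 : ∀ c : Fin m,
      (∑ g : Fin ℓ → Fin m,
        if (∑ i, (((Fin.consEquiv (fun _ : Fin (ℓ+1) => Fin m)) (c, g) i : ℕ) + 1)) = k
          then 1 else 0)
      = hatf (fun k' => C m k' ℓ) k (c : ℕ) := by
    intro c
    simp only [h1]
    unfold hatf
    split_ifs with hc
    · rw [← Finset.card_filter]
      unfold C
      congr 1
      apply Finset.filter_congr
      intro g _
      constructor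
      · intro h; omega
      · intro h; omega
    · rw [Finset.sum_eq_zero]
      intro g _
      rw [if_neg]
      have : 0 ≤ ∑ i, ((g i : ℕ) + 1) := Nat.zero_le _
      omega
  rw [Finset.sum_congr rfl (fun c _ => h2 c)]
  exact Fin.sum_univ_eq_sum_range (fun a => hatf (fun k' => C m k' ℓ) k a) m

lemma C_eq_D (m : ℕ) : ∀ ℓ k, C m k ℓ = D m ℓ k := by
  intro ℓ
  induction ℓ with
  | zero => intro k; rw [C_zero]; rfl
  | succ ℓ ih =>
    intro k
    rw [C_succ]
    show _ = ∑ a ∈ Finset.range m, hatf (D m ℓ) k a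
    apply Finset.sum_congr rfl
    intro a _
    unfold hatf
    split_ifs
    · exact ih _
    · rfl

lemma hatf_shift (u : ℕ → ℕ) (t a d : ℕ) : hatf u (t + d) (a + d) = hatf u t a := by
  unfold hatf
  by_cases h : a + 1 ≤ t
  · rw [if_pos (by omega), if_pos h]
    congr 1
    omega
  · rw [if_neg (by omega), if_neg h]

/-- the exchange involution -/
def phiFn (d m : ℕ) (p : ℕ × ℕ) : ℕ × ℕ :=
  if p.1 + d < p.2 ∨ (p.2 < p.1 + d ∧ d ≤ p.2 ∧ p.1 + d + 1 ≤ m) then (p.2 - d, p.1 + d) else p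

lemma phiFn_mem (d m : ℕ) (p : ℕ × ℕ) (hp : p ∈ Finset.range m ×ˢ Finset.range m) :
    phiFn d m p ∈ Finset.range m ×ˢ Finset.range m := by
  obtain ⟨a, b⟩ := p
  simp only [Finset.mem_product, Finset.mem_range] at hp ⊢
  unfold phiFn
  split_ifs with h
  · simp only
    omega
  · exact hp

lemma phiFn_invol (d m : ℕ) (p : ℕ × ℕ) (hp : p ∈ Finset.range m ×ˢ Finset.range m) :
    phiFn d m (phiFn d m p) = p := by
  obtain ⟨a, b⟩ := p
  simp only [Finset.mem_product, Finset.mem_range] at hp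
  unfold phiFn
  split_ifs with h1 h2 <;> first
    | rfl
    | (simp only [Prod.mk.injEq] at *; omega)

lemma swap_key (v w : ℕ → ℕ) (m d j : ℕ)
    (H : ∀ x y, x ≤ y → v y * w x ≤ v x * w y) :
    (∑ a ∈ Finset.range m, hatf v (j + d) a) * (∑ b ∈ Finset.range m, hatf w j b) ≤
    (∑ a ∈ Finset.range m, hatf v j a) * (∑ b ∈ Finset.range m, hatf w (j + d) b) := by
  rw [mul_comm]
  rw [Finset.sum_mul_sum, Finset.sum_mul_sum]
  rw [← Finset.sum_product', ← Finset.sum_product']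
  set s := Finset.range m ×ˢ Finset.range m with hs
  set T2 : ℕ × ℕ → ℕ := fun p => hatf w j p.1 * hatf v (j + d) p.2 with hT2
  set T1 : ℕ × ℕ → ℕ := fun p => hatf v j p.1 * hatf w (j + d) p.2 with hT1
  show ∑ p ∈ s, T2 p ≤ ∑ p ∈ s, T1 p
  have step1 : ∑ p ∈ s, T2 p = ∑ p ∈ s, T2 (phiFn d m p) := by
    apply Finset.sum_nbij' (i := phiFn d m) (j := phiFn d m)
    · exact fun p hp => phiFn_mem d m p hp
    · exact fun p hp => phiFn_mem d m p hp
    · exact fun p hp => phiFn_invol d m p hp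
    · exact fun p hp => phiFn_invol d m p hp
    · intro p hp
      rw [phiFn_invol d m p hp]
  rw [step1]
  apply Finset.sum_le_sum
  intro p hp
  obtain ⟨a, b⟩ := p
  simp only [Finset.mem_product, Finset.mem_range, hs] at hp
  unfold phiFn
  split_ifs with hB
  · -- exchange case: equality of terms
    simp only [hT1, hT2]
    have hdb : d ≤ b := by omega
    have e1 : hatf v (j + d) (a + d) = hatf v j a := hatf_shift v j a d
    have e2 : hatf w (j + d) b = hatf w j (b - d) := by
      have h := hatf_shift w j (b - d) d
      rw [show b - d + d = b by omega] at h
      exact h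
    rw [e1, ← e2, mul_comm]
  · -- ordered case: use the TP₂ hypothesis
    simp only [hT1, hT2]
    have hgood : b ≤ a + d := by omega
    unfold hatf
    split_ifs with c1 c2 c2
    · rw [mul_comm]
      apply H
      omega
    · simp
    · simp
    · simp

lemma D_one_zero (m : ℕ) : D m 1 0 = 0 := by
  show (∑ a ∈ Finset.range m, hatf (D m 0) 0 a) = 0
  apply Finset.sum_eq_zero
  intro a _
  unfold hatf
  rw [if_neg (by omega)]

/-- two consecutive rows of `D` form a TP₂ pair -/
lemma tp2 (m : ℕ) : ∀ ℓ x y, x ≤ y → D m ℓ y * D m (ℓ + 1) x ≤ D m ℓ x * D m (ℓ + 1) y := by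
  intro ℓ
  induction ℓ with
  | zero =>
    intro x y hxy
    rcases Nat.eq_zero_or_pos y with hy | hy
    · have hx : x = 0 := by omega
      subst hy; subst hx
      rw [D_one_zero]
    · have : D m 0 y = 0 := by
        show (if y = 0 then 1 else 0) = 0
        rw [if_neg (by omega)]
      rw [this, zero_mul]
      exact Nat.zero_le _
  | succ ℓ ih =>
    intro x y hxy
    obtain ⟨d, rfl⟩ : ∃ d, y = x + d := ⟨y - x, by omega⟩
    show (∑ a ∈ Finset.range m, hatf (D m ℓ) (x + d) a) *
        (∑ b ∈ Finset.range m, hatf (D m (ℓ+1)) x b) ≤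
      (∑ a ∈ Finset.range m, hatf (D m ℓ) x a) *
        (∑ b ∈ Finset.range m, hatf (D m (ℓ+1)) (x + d) b)
    exact swap_key (D m ℓ) (D m (ℓ+1)) m d x (fun x' y' h => ih x' y' h)

/-- log-concavity of `D m · k` -/
lemma logconcave (m k ℓ : ℕ) :
    D m ℓ k * D m (ℓ + 2) k ≤ D m (ℓ + 1) k * D m (ℓ + 1) k := by
  have e2 : D m (ℓ + 2) k = ∑ a ∈ Finset.range m, hatf (D m (ℓ+1)) k a := rfl
  have e1 : D m (ℓ + 1) k = ∑ a ∈ Finset.range m, hatf (D m ℓ) k a := rfl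
  calc D m ℓ k * D m (ℓ + 2) k
      = ∑ a ∈ Finset.range m, D m ℓ k * hatf (D m (ℓ+1)) k a := by
        rw [e2, Finset.mul_sum]
    _ ≤ ∑ a ∈ Finset.range m, hatf (D m ℓ) k a * D m (ℓ+1) k := by
        apply Finset.sum_le_sum
        intro a _
        unfold hatf
        split_ifs with h
        · exact tp2 m ℓ (k - (a+1)) k (by omega)
        · simp
    _ = D m (ℓ + 1) k * D m (ℓ + 1) k := by
        rw [← Finset.sum_mul, ← e1]

/-- positivity on the support -/
lemma D_pos (m : ℕ) : ∀ ℓ k, ℓ ≤ k → k ≤ ℓ * m → 0 < D m ℓ k := by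
  intro ℓ
  induction ℓ with
  | zero =>
    intro k h1 h2
    have : k = 0 := by omega
    subst this
    show 0 < (if (0:ℕ) = 0 then 1 else 0)
    simp
  | succ ℓ ih =>
    intro k h1 h2
    rw [show (ℓ+1) * m = ℓ * m + m from by ring] at h2
    have hm : 1 ≤ m := by
      rcases Nat.eq_zero_or_pos m with h | h
      · subst h; simp at h2; omega
      · exact h
    set a₀ : ℕ := max 1 (k - ℓ * m) with ha₀
    have ha1 : 1 ≤ a₀ := le_max_left _ _
    have ha2 : a₀ ≤ m := by
      have : k - ℓ * m ≤ m := by omega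
      omega
    have hak : a₀ ≤ k := by
      have : 1 ≤ k := by omega
      have : k - ℓ * m ≤ k := by omega
      omega
    have hlow : ℓ ≤ k - a₀ := by
      have : a₀ ≤ k - ℓ := by
        have h3 : 1 ≤ k - ℓ := by omega
        have h4 : k - ℓ * m ≤ k - ℓ := by
          have : ℓ ≤ ℓ * m := by nlinarith
          omega
        omega
      omega
    have hhigh : k - a₀ ≤ ℓ * m := by
      have : k - ℓ * m ≤ a₀ := le_max_right _ _
      omega
    have hterm : 0 < hatf (D m ℓ) k (a₀ - 1) := by
      unfold hatf
      rw [if_pos (by omega)]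
      have : k - (a₀ - 1 + 1) = k - a₀ := by omega
      rw [this]
      exact ih (k - a₀) hlow hhigh
    show 0 < ∑ a ∈ Finset.range m, hatf (D m ℓ) k a
    calc 0 < hatf (D m ℓ) k (a₀ - 1) := hterm
      _ ≤ ∑ a ∈ Finset.range m, hatf (D m ℓ) k a := by
          apply Finset.single_le_sum (f := fun a => hatf (D m ℓ) k a)
          · intro i _; exact Nat.zero_le _
          · rw [Finset.mem_range]; omega

theorem stmt_4 (k m : ℕ) (hk : 1 ≤ k) (hm : 2 ≤ m) :
    ∃ α : ℕ, (k + m - 1) / m ≤ α ∧ α ≤ k ∧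
      (∀ i j : ℕ, (k + m - 1) / m ≤ i → i ≤ j → j ≤ α → C m k i ≤ C m k j) ∧
      (∀ i j : ℕ, α ≤ i → i ≤ j → j ≤ k → C m k j ≤ C m k i) := by
  have hm0 : 0 < m := by omega
  set q := (k + m - 1) / m with hq
  have hql : ∀ ℓ, q ≤ ℓ → k ≤ ℓ * m := by
    intro ℓ hℓ
    by_contra hcon
    push_neg at hcon
    have h1 : (ℓ + 1) * m ≤ k + m - 1 := by
      rw [show (ℓ + 1) * m = ℓ * m + m from by ring]
      omega
    have h2 : ℓ + 1 ≤ q := by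
      rw [hq, Nat.le_div_iff_mul_le hm0]
      exact h1
    omega
  have hqk : q ≤ k := by
    by_contra hcon
    push_neg at hcon
    have h1 : k + 1 ≤ q := hcon
    rw [hq, Nat.le_div_iff_mul_le hm0] at h1
    have h2 : k ≤ k * m := Nat.le_mul_of_pos_right k hm0
    rw [show (k + 1) * m = k * m + m from by ring] at h1
    omega
  have hpos : ∀ ℓ, q ≤ ℓ → ℓ ≤ k → 0 < D m ℓ k :=
    fun ℓ h1 h2 => D_pos m ℓ k h2 (hql ℓ h1)
  have hstep : ∀ t, q ≤ t → t + 1 ≤ k → D m (t+1) k ≤ D m t k →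
      D m (t+2) k ≤ D m (t+1) k := by
    intro t h1 h2 h3
    have hp : 0 < D m (t+1) k := hpos (t+1) (by omega) h2
    have hmm : D m (t+1) k * D m (t+2) k ≤ D m (t+1) k * D m (t+1) k := by
      calc D m (t+1) k * D m (t+2) k ≤ D m t k * D m (t+2) k :=
            Nat.mul_le_mul_right _ h3
        _ ≤ _ := logconcave m k t
    exact Nat.le_of_mul_le_mul_left hmm hp
  have hdescend : ∀ t, q ≤ t → D m (t+1) k ≤ D m t k →
      ∀ s, t ≤ s → s < k → D m (s+1) k ≤ D m s k := by
    intro t h1 h3 s hts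
    induction s, hts using Nat.le_induction with
    | base => intro _; exact h3
    | succ s hts ih =>
      intro hsk
      exact hstep s (by omega) (by omega) (ih (by omega))
  set S := (Finset.Icc q k).filter
    (fun ℓ => ∀ t, ℓ ≤ t → t < k → D m (t+1) k ≤ D m t k) with hS
  have hkS : k ∈ S := by
    rw [hS, Finset.mem_filter, Finset.mem_Icc]
    exact ⟨⟨hqk, le_rfl⟩, fun t h1 h2 => absurd h2 (by omega)⟩
  have hSne : S.Nonempty := ⟨k, hkS⟩
  set α := S.min' hSne with hα
  have hαS : α ∈ S := S.min'_mem hSne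
  rw [hS, Finset.mem_filter, Finset.mem_Icc] at hαS
  obtain ⟨⟨hαq, hαk⟩, hαprop⟩ := hαS
  have hup : ∀ t, q ≤ t → t < α → D m t k ≤ D m (t+1) k := by
    intro t h1 h2
    by_contra hcon
    push_neg at hcon
    have htS : t ∈ S := by
      rw [hS, Finset.mem_filter, Finset.mem_Icc]
      exact ⟨⟨h1, by omega⟩, fun s hts hsk => hdescend t h1 (le_of_lt hcon) s hts hsk⟩
    have := S.min'_le t htS
    omega
  refine ⟨α, hαq, hαk, ?_, ?_⟩
  · intro i j h1 h2 h3
    rw [C_eq_D m i k, C_eq_D m j k]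
    induction j, h2 using Nat.le_induction with
    | base => exact le_rfl
    | succ j hij ih =>
      exact le_trans (ih (by omega)) (hup j (by omega) (by omega))
  · intro i j h1 h2 h3
    rw [C_eq_D m i k, C_eq_D m j k]
    induction j, h2 using Nat.le_induction with
    | base => exact le_rfl
    | succ j hij ih =>
      exact le_trans (hαprop j (by omega) (by omega)) (ih (by omega))
end

section
/- Define α(k) as the smallest index i achieving the maximum of C_{k,q}, ..., C_{k,k} where q = ⌈k/m⌉. Then for all k ≥ 2, 0 ≤ α(k) − α(k−1) ≤ 1. -/
open Finset

def Nz (m : ℕ) : ℕ → ℤ → ℤ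
  | 0, n => if n = 0 then 1 else 0
  | (ℓ+1), n => ∑ t ∈ Finset.range m, Nz m ℓ (n - t)

lemma Nz_nonneg (m ℓ : ℕ) (n : ℤ) : 0 ≤ Nz m ℓ n := by
  induction ℓ generalizing n with
  | zero => simp only [Nz]; split <;> norm_num
  | succ ℓ ih => exact Finset.sum_nonneg fun t _ => ih _

lemma Nz_tp2 (m : ℕ) (ℓ : ℕ) : ∀ x1 x2 y1 y2 : ℤ, x1 ≤ x2 → y1 ≤ y2 →
    Nz m ℓ (y1 - x2) * Nz m ℓ (y2 - x1) ≤ Nz m ℓ (y1 - x1) * Nz m ℓ (y2 - x2) := by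
  induction ℓ with
  | zero =>
    intro x1 x2 y1 y2 hx hy
    by_cases h1 : y1 - x2 = 0
    · by_cases h2 : y2 - x1 = 0
      · have : x1 = x2 := by omega
        subst this
        simp
      · have : Nz m 0 (y2 - x1) = 0 := by simp [Nz, h2]
        rw [this, mul_zero]
        exact mul_nonneg (Nz_nonneg m 0 _) (Nz_nonneg m 0 _)
    · have : Nz m 0 (y1 - x2) = 0 := by simp [Nz, h1]
      rw [this, zero_mul]
      exact mul_nonneg (Nz_nonneg m 0 _) (Nz_nonneg m 0 _)
  | succ ℓ ih =>
    intro x1 x2 y1 y2 hx hy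
    simp only [Nz]
    rw [Finset.sum_mul_sum, Finset.sum_mul_sum]
    rw [← Finset.sum_product', ← Finset.sum_product']
    rw [← sub_nonneg, ← Finset.sum_sub_distrib]
    set Term : ℕ × ℕ → ℤ := fun p =>
      Nz m ℓ (y1 - x1 - p.1) * Nz m ℓ (y2 - x2 - p.2) -
      Nz m ℓ (y1 - x2 - p.1) * Nz m ℓ (y2 - x1 - p.2) with hTerm
    show 0 ≤ ∑ p ∈ Finset.range m ×ˢ Finset.range m, Term p
    set S := Finset.range m ×ˢ Finset.range m with hS
    classical
    have hTerm0 : ∀ p ∈ S.filter (fun p : ℕ × ℕ => (y1 - p.1 : ℤ) ≤ y2 - p.2), 0 ≤ Term p := by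
      intro p hp
      rw [Finset.mem_filter] at hp
      have h := ih x1 x2 (y1 - p.1) (y2 - p.2) hx hp.2
      simp only [hTerm]
      have e1 : y1 - ↑p.1 - x2 = y1 - x2 - p.1 := by ring
      have e2 : y2 - ↑p.2 - x1 = y2 - x1 - p.2 := by ring
      have e3 : y1 - ↑p.1 - x1 = y1 - x1 - p.1 := by ring
      have e4 : y2 - ↑p.2 - x2 = y2 - x2 - p.2 := by ring
      rw [e1, e2, e3, e4] at h
      omega
    set d : ℕ := (y2 - y1).toNat with hd
    have hdy : (d : ℤ) = y2 - y1 := Int.toNat_of_nonneg (by omega)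
    set φ : ℕ × ℕ → ℕ × ℕ := fun p => (p.2 - d, p.1 + d) with hφ
    set D1 := S.filter (fun p : ℕ × ℕ => ¬ ((y1 - p.1 : ℤ) ≤ y2 - p.2)) with hD1
    have hmem : ∀ p ∈ D1, (p.2 : ℤ) > p.1 + d ∧ p.1 < m ∧ p.2 < m := by
      intro p hp
      rw [hD1, Finset.mem_filter, hS, Finset.mem_product, Finset.mem_range, Finset.mem_range] at hp
      refine ⟨by omega, hp.1.1, hp.1.2⟩
    have hφmem : ∀ p ∈ D1, φ p ∈ S.filter (fun p : ℕ × ℕ => (y1 - p.1 : ℤ) ≤ y2 - p.2) := by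
      intro p hp
      obtain ⟨h1, h2, h3⟩ := hmem p hp
      rw [Finset.mem_filter, hS, Finset.mem_product, Finset.mem_range, Finset.mem_range]
      simp only [hφ]
      refine ⟨⟨by omega, by omega⟩, ?_⟩
      show (y1 - (↑(p.2 - d)) : ℤ) ≤ y2 - (↑(p.1 + d))
      have e2 : ((p.2 - d : ℕ) : ℤ) = (p.2 : ℤ) - d := by omega
      have e3 : ((p.1 + d : ℕ) : ℤ) = (p.1 : ℤ) + d := by push_cast; ring
      omega
    have hφinj : ∀ p ∈ D1, ∀ q ∈ D1, φ p = φ q → p = q := by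
      intro p hp q hq hpq
      obtain ⟨h1, -, -⟩ := hmem p hp
      obtain ⟨h2, -, -⟩ := hmem q hq
      simp only [hφ, Prod.mk.injEq] at hpq
      have e1 : p.1 = q.1 := by omega
      have e2 : p.2 = q.2 := by omega
      exact Prod.ext e1 e2
    have hφneg : ∀ p ∈ D1, Term (φ p) = - Term p := by
      intro p hp
      obtain ⟨h1, -, -⟩ := hmem p hp
      simp only [hTerm, hφ]
      have e2 : ((p.2 - d : ℕ) : ℤ) = (p.2 : ℤ) - d := by omega
      have e3 : ((p.1 + d : ℕ) : ℤ) = (p.1 : ℤ) + d := by push_cast; ring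
      rw [e2, e3]
      have e4 : y1 - x1 - ((p.2:ℤ) - d) = y2 - x1 - p.2 := by omega
      have e5 : y2 - x2 - ((p.1:ℤ) + d) = y1 - x2 - p.1 := by omega
      have e6 : y1 - x2 - ((p.2:ℤ) - d) = y2 - x2 - p.2 := by omega
      have e7 : y2 - x1 - ((p.1:ℤ) + d) = y1 - x1 - p.1 := by omega
      rw [e4, e5, e6, e7]
      ring
    rw [← Finset.sum_filter_add_sum_filter_not S (fun p : ℕ × ℕ => (y1 - p.1 : ℤ) ≤ y2 - p.2) Term]
    set D0 := S.filter (fun p : ℕ × ℕ => (y1 - p.1 : ℤ) ≤ y2 - p.2) with hD0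
    have himg : D1.image φ ⊆ D0 := by
      intro x hx
      rw [Finset.mem_image] at hx
      obtain ⟨p, hp, rfl⟩ := hx
      exact hφmem p hp
    have hsum1 : ∑ p ∈ D1, Term p = - ∑ p ∈ D1.image φ, Term p := by
      rw [Finset.sum_image hφinj]
      rw [Finset.sum_congr rfl (fun p hp => hφneg p hp), Finset.sum_neg_distrib, neg_neg]
    rw [hsum1]
    have hsd := Finset.sum_sdiff (f := Term) himg
    have hpos : 0 ≤ ∑ p ∈ D0 \ D1.image φ, Term p :=
      Finset.sum_nonneg fun p hp => hTerm0 p (Finset.mem_sdiff.mp hp).1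
    omega

lemma Nz_slc (m ℓ : ℕ) {a b c d : ℤ} (h : a + b = c + d) (hac : a ≤ c) (hcd : c ≤ d) :
    Nz m ℓ a * Nz m ℓ b ≤ Nz m ℓ c * Nz m ℓ d := by
  have := Nz_tp2 m ℓ 0 (c - a) c b (by omega) (by omega)
  have e1 : c - (c - a) = a := by ring
  have e2 : b - 0 = b := by ring
  have e3 : c - 0 = c := by ring
  have e4 : b - (c - a) = d := by omega
  rwa [e1, e2, e3, e4] at this

lemma Nz_pos (m : ℕ) (hm : 1 ≤ m) : ∀ (ℓ : ℕ) (n : ℤ), 0 ≤ n → n ≤ ℓ * (m - 1 : ℕ) → 0 < Nz m ℓ n := by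
  intro ℓ
  induction ℓ with
  | zero =>
    intro n h0 h1
    have hn : n = 0 := le_antisymm (by simpa using h1) h0
    simp [Nz, hn]
  | succ ℓ ih =>
    intro n h0 h1
    have hcast : ((ℓ + 1 : ℕ) * (m - 1 : ℕ) : ℤ) = (ℓ : ℤ) * (m - 1) + (m - 1) := by
      push_cast [Nat.cast_sub hm]; ring
    set t : ℤ := min n (m - 1 : ℤ) with ht
    have ht0 : 0 ≤ t := by omega
    have htm : t ≤ (m : ℤ) - 1 := by omega
    have h2 : 0 ≤ n - t := by omega
    have h3 : n - t ≤ (ℓ : ℕ) * (m - 1 : ℕ) := by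
      push_cast [Nat.cast_sub hm] at h1 ⊢
      have expand : ((ℓ:ℤ)+1)*((m:ℤ)-1) = (ℓ:ℤ)*((m:ℤ)-1) + ((m:ℤ)-1) := by ring
      have hnn : 0 ≤ (ℓ:ℤ)*((m:ℤ)-1) := by
        apply mul_nonneg (by positivity)
        have : (1:ℤ) ≤ m := by exact_mod_cast hm
        omega
      rcases le_total n ((m:ℤ)-1) with hc | hc
      · rw [ht, min_eq_left hc]; linarith
      · rw [ht, min_eq_right hc]; linarith
    have hpos := ih (n - t) h2 h3
    show 0 < ∑ s ∈ Finset.range m, Nz m ℓ (n - s)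
    have htnat : t.toNat < m := by omega
    have : Nz m ℓ (n - (t.toNat : ℤ)) = Nz m ℓ (n - t) := by
      congr 1; omega
    calc (0 : ℤ) < Nz m ℓ (n - (t.toNat : ℤ)) := by rw [this]; exact hpos
      _ ≤ ∑ s ∈ Finset.range m, Nz m ℓ (n - s) :=
        Finset.single_le_sum (f := fun s : ℕ => Nz m ℓ (n - s))
          (fun s _ => Nz_nonneg m ℓ _) (Finset.mem_range.mpr htnat)


lemma card_link (m : ℕ) : ∀ (ℓ : ℕ) (n : ℤ),
    ((Finset.univ.filter (fun f : Fin ℓ → Fin m => (∑ i, ((f i : ℕ) : ℤ)) = n)).card : ℤ) = Nz m ℓ n := by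
  intro ℓ
  induction ℓ with
  | zero =>
    intro n
    rw [Finset.filter_congr (fun f _ => by simp : ∀ f ∈ (Finset.univ : Finset (Fin 0 → Fin m)),
      ((∑ i, ((f i : ℕ) : ℤ)) = n ↔ ((0:ℤ) = n))), Finset.filter_const]
    by_cases h : (0:ℤ) = n
    · rw [if_pos h, Finset.card_univ]
      have : Fintype.card (Fin 0 → Fin m) = 1 := by simp
      rw [this]
      simp [Nz, h.symm]
    · rw [if_neg h]
      simp [Nz, Ne.symm h]
  | succ ℓ ih =>
    intro n
    rw [Finset.card_filter]
    push_cast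
    rw [← Equiv.sum_comp (Fin.consEquiv (fun _ : Fin (ℓ+1) => Fin m))
      (fun f : Fin (ℓ+1) → Fin m => if (∑ i, ((f i : ℕ) : ℤ)) = n then (1:ℤ) else 0)]
    rw [Fintype.sum_prod_type]
    have hstep : ∀ t : Fin m,
        (∑ g : Fin ℓ → Fin m,
          if (∑ i, (((Fin.consEquiv (fun _ : Fin (ℓ+1) => Fin m)) (t, g)) i : ℤ)) = n then (1:ℤ) else 0)
        = Nz m ℓ (n - ((t : ℕ) : ℤ)) := by
      intro t
      have hc : ∀ g : Fin ℓ → Fin m,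
          ((∑ i, (((Fin.consEquiv (fun _ : Fin (ℓ+1) => Fin m)) (t, g)) i : ℤ)) = n)
          ↔ ((∑ i, ((g i : ℕ) : ℤ)) = n - ((t : ℕ) : ℤ)) := by
        intro g
        have : ((Fin.consEquiv (fun _ : Fin (ℓ+1) => Fin m)) (t, g)) = Fin.cons t g := rfl
        rw [this]
        rw [Fin.sum_univ_succ]
        simp only [Fin.cons_zero, Fin.cons_succ]
        constructor <;> intro h <;> omega
      calc (∑ g : Fin ℓ → Fin m,
          if (∑ i, (((Fin.consEquiv (fun _ : Fin (ℓ+1) => Fin m)) (t, g)) i : ℤ)) = n then (1:ℤ) else 0)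
          = ∑ g : Fin ℓ → Fin m,
            if (∑ i, ((g i : ℕ) : ℤ)) = n - ((t : ℕ) : ℤ) then (1:ℤ) else 0 := by
            apply Finset.sum_congr rfl
            intro g _
            rw [if_congr (hc g) rfl rfl]
        _ = Nz m ℓ (n - ((t : ℕ) : ℤ)) := by
            rw [← ih (n - ((t : ℕ) : ℤ)), Finset.card_filter]
            push_cast
            rfl
    rw [Finset.sum_congr rfl (fun t _ => hstep t)]
    show (∑ t : Fin m, (fun s : ℕ => Nz m ℓ (n - s)) (t : ℕ)) = Nz m (ℓ+1) n
    rw [Fin.sum_univ_eq_sum_range (fun s : ℕ => Nz m ℓ (n - s)) m]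
    rfl

/-- `alpha m k` is the smallest index `i` (with `⌈k/m⌉ ≤ i ≤ k`) achieving the
maximum of `C m k q, …, C m k k`, where `q = ⌈k/m⌉`. -/
noncomputable def alpha (m k : ℕ) : ℕ :=
  sInf {i | i ∈ Finset.Icc ((k + m - 1) / m) k ∧
    C m k i = (Finset.Icc ((k + m - 1) / m) k).sup (C m k)}

lemma C_eq (m k ℓ : ℕ) : (C m k ℓ : ℤ) = Nz m ℓ ((k:ℤ) - ℓ) := by
  rw [← card_link m ℓ ((k:ℤ) - ℓ)]
  unfold C
  congr 1
  apply congrArg Finset.card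
  apply Finset.filter_congr
  intro f _
  have h1 : ∑ i, ((f i : ℕ) + 1) = (∑ i, (f i : ℕ)) + ℓ := by
    rw [Finset.sum_add_distrib]
    simp
  rw [h1]
  have h2 : (∑ i, ((f i : ℕ) : ℤ)) = ((∑ i, (f i : ℕ) : ℕ) : ℤ) := by push_cast; rfl
  rw [h2]
  constructor <;> intro h <;> omega

lemma C_pos (m : ℕ) (hm : 1 ≤ m) {k ℓ : ℕ} (h1 : ℓ ≤ k) (h2 : k ≤ m * ℓ) : 0 < C m k ℓ := by
  have : (0:ℤ) < (C m k ℓ : ℤ) := by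
    rw [C_eq]
    apply Nz_pos m hm ℓ _ (by omega)
    have hc : (ℓ:ℤ) * (((m - 1 : ℕ)):ℤ) = (ℓ:ℤ) * ((m:ℤ) - 1) := by
      rw [Nat.cast_sub hm]; push_cast; ring
    rw [hc]
    have : ((k:ℤ)) ≤ (m:ℤ) * ℓ := by exact_mod_cast h2
    nlinarith [this]
  exact_mod_cast this

lemma cross1 (m k ℓ : ℕ) : C m (k+1) ℓ * C m k (ℓ+1) ≤ C m (k+1) (ℓ+1) * C m k ℓ := by
  have goal : ((C m (k+1) ℓ : ℤ)) * (C m k (ℓ+1)) ≤ ((C m (k+1) (ℓ+1) : ℤ)) * (C m k ℓ) := by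
    rw [C_eq, C_eq, C_eq, C_eq]
    set n : ℤ := (k:ℤ) - ℓ with hn
    have e1 : ((k:ℤ)+1) - ℓ = n + 1 := by push_cast; ring
    have e2 : ((k:ℤ)) - (ℓ+1) = n - 1 := by push_cast; ring
    have e3 : ((k:ℤ)+1) - (ℓ+1) = n := by push_cast; ring
    push_cast
    rw [e1, e2, e3]
    show Nz m ℓ (n+1) * Nz m (ℓ+1) (n-1) ≤ Nz m (ℓ+1) n * Nz m ℓ n
    have expand : ∀ x : ℤ, Nz m (ℓ+1) x = ∑ t ∈ Finset.range m, Nz m ℓ (x - t) := fun x => rfl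
    rw [expand, expand, Finset.mul_sum, Finset.sum_mul]
    apply Finset.sum_le_sum
    intro t _
    rw [mul_comm (Nz m ℓ (n+1)) (Nz m ℓ (n - 1 - (t:ℤ)))]
    exact Nz_slc m ℓ (by ring) (by omega) (by omega)
  exact_mod_cast goal

lemma convratio (m ℓ : ℕ) {x y : ℤ} (hxy : x ≤ y) :
    Nz m (ℓ+1) x * Nz m ℓ y ≤ Nz m (ℓ+1) y * Nz m ℓ x := by
  have expand : ∀ z : ℤ, Nz m (ℓ+1) z = ∑ t ∈ Finset.range m, Nz m ℓ (z - t) := fun z => rfl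
  rw [expand, expand, Finset.sum_mul, Finset.sum_mul]
  apply Finset.sum_le_sum
  intro s _
  rcases le_total x ((y:ℤ) - s) with hc | hc
  · calc Nz m ℓ (x - s) * Nz m ℓ y ≤ Nz m ℓ x * Nz m ℓ (y - s) :=
        Nz_slc m ℓ (by ring) (by omega) hc
      _ = Nz m ℓ (y - s) * Nz m ℓ x := mul_comm _ _
  · exact Nz_slc m ℓ (by ring) (by omega) hc

lemma cross2 (m k ℓ : ℕ) : C m (k+1) (ℓ+2) * C m k ℓ ≤ C m (k+1) (ℓ+1) * C m k (ℓ+1) := by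
  have goal : ((C m (k+1) (ℓ+2) : ℤ)) * (C m k ℓ) ≤ ((C m (k+1) (ℓ+1) : ℤ)) * (C m k (ℓ+1)) := by
    rw [C_eq, C_eq, C_eq, C_eq]
    set n : ℤ := (k:ℤ) - ℓ - 1 with hn
    have e1 : ((k:ℤ)+1) - ((ℓ:ℤ)+2) = n := by push_cast; ring
    have e2 : ((k:ℤ)) - ℓ = n + 1 := by ring
    have e3 : ((k:ℤ)+1) - ((ℓ:ℤ)+1) = n + 1 := by push_cast; ring
    have e4 : ((k:ℤ)) - ((ℓ:ℤ)+1) = n := by push_cast; ring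
    push_cast
    rw [e1, e2, e3, e4]
    show Nz m (ℓ+2) n * Nz m ℓ (n+1) ≤ Nz m (ℓ+1) (n+1) * Nz m (ℓ+1) n
    have expand : ∀ z : ℤ, Nz m (ℓ+2) z = ∑ t ∈ Finset.range m, Nz m (ℓ+1) (z - t) := fun z => rfl
    have expand1 : Nz m (ℓ+1) n = ∑ t ∈ Finset.range m, Nz m ℓ (n - t) := rfl
    rw [expand, Finset.sum_mul]
    conv_rhs => rw [expand1, Finset.mul_sum]
    apply Finset.sum_le_sum
    intro t _
    exact convratio m ℓ (by omega : (n - t : ℤ) ≤ n + 1)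
  exact_mod_cast goal

section Main
variable (m : ℕ)

/-- ceiling -/
def q (k : ℕ) : ℕ := (k + m - 1) / m

lemma q_le_self (hm : 1 ≤ m) {k : ℕ} (hk : 1 ≤ k) : q m k ≤ k := by
  have hk2 : k + m - 1 < (k+1) * m := by
    have h1 : k ≤ k * m := Nat.le_mul_of_pos_right k hm
    have h2 : (k+1) * m = k * m + m := by ring
    omega
  have : q m k < k + 1 := (Nat.div_lt_iff_lt_mul hm).mpr hk2
  omega

lemma le_mul_q (hm : 1 ≤ m) (k : ℕ) : k ≤ m * q m k := by
  have hdm := Nat.div_add_mod (k + m - 1) m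
  have hlt : (k + m - 1) % m < m := Nat.mod_lt _ hm
  unfold q
  omega

lemma q_mono {k : ℕ} : q m k ≤ q m (k+1) := Nat.div_le_div_right (by omega)

lemma q_succ_le (hm : 1 ≤ m) (k : ℕ) : q m (k+1) ≤ q m k + 1 := by
  unfold q
  have h1 : k + 1 + m - 1 ≤ (k + m - 1) + m := by omega
  calc (k + 1 + m - 1) / m ≤ ((k + m - 1) + m) / m := Nat.div_le_div_right h1
    _ = (k + m - 1) / m + 1 := Nat.add_div_right _ hm

lemma C_pos' (hm : 1 ≤ m) {k i : ℕ} (h1 : q m k ≤ i) (h2 : i ≤ k) (hk : 1 ≤ k) : 0 < C m k i := by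
  apply C_pos m hm h2
  calc k ≤ m * q m k := le_mul_q m hm k
    _ ≤ m * i := Nat.mul_le_mul_left m h1

lemma alpha_mem (hm : 1 ≤ m) {k : ℕ} (hk : 1 ≤ k) :
    alpha m k ∈ Finset.Icc (q m k) k ∧
      C m k (alpha m k) = (Finset.Icc (q m k) k).sup (C m k) := by
  have hne : (Finset.Icc (q m k) k).Nonempty := by
    rw [Finset.nonempty_Icc]; exact q_le_self m hm hk
  obtain ⟨i, hi, hsup⟩ := Finset.exists_mem_eq_sup _ hne (C m k)
  have hne2 : {i | i ∈ Finset.Icc ((k + m - 1) / m) k ∧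
      C m k i = (Finset.Icc ((k + m - 1) / m) k).sup (C m k)}.Nonempty := ⟨i, hi, hsup.symm⟩
  exact Nat.sInf_mem hne2

lemma alpha_le (hm : 1 ≤ m) {k i : ℕ} (hi : i ∈ Finset.Icc (q m k) k)
    (hC : C m k i = (Finset.Icc (q m k) k).sup (C m k)) : alpha m k ≤ i :=
  Nat.sInf_le (⟨hi, hC⟩ : i ∈ {i | i ∈ Finset.Icc ((k + m - 1) / m) k ∧
      C m k i = (Finset.Icc ((k + m - 1) / m) k).sup (C m k)})

def Inc (k : ℕ) : Prop := ∀ i, q m k ≤ i → i < alpha m k → C m k i < C m k (i+1)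
def Dec (k : ℕ) : Prop := ∀ j, alpha m k ≤ j → j < k → C m k (j+1) ≤ C m k j

lemma step (hm : 2 ≤ m) (k : ℕ) (hk : 1 ≤ k) (hInc : Inc m k) (hDec : Dec m k) :
    Inc m (k+1) ∧ Dec m (k+1) ∧ alpha m k ≤ alpha m (k+1) ∧ alpha m (k+1) ≤ alpha m k + 1 := by
  have hm1 : 1 ≤ m := by omega
  obtain ⟨haIcc, hasup⟩ := alpha_mem m hm1 hk
  rw [Finset.mem_Icc] at haIcc
  set a := alpha m k with ha
  obtain ⟨haq, hak⟩ := haIcc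
  -- positivity helpers
  have hCk : ∀ i, q m k ≤ i → i ≤ k → 0 < C m k i := fun i h1 h2 => C_pos' m hm1 h1 h2 hk
  have hCk1 : ∀ i, q m (k+1) ≤ i → i ≤ k+1 → 0 < C m (k+1) i :=
    fun i h1 h2 => C_pos' m hm1 h1 h2 (by omega)
  -- sub-step 1
  have sub1 : ∀ i, q m (k+1) ≤ i → i < a → C m (k+1) i < C m (k+1) (i+1) := by
    intro i hiq hia
    have hiq' : q m k ≤ i := le_trans (q_mono m) hiq
    have hik : i ≤ k := by omega
    have h1 : C m k i < C m k (i+1) := hInc i hiq' hia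
    have h2 := cross1 m k i
    have p1 : 0 < C m (k+1) i := hCk1 i hiq (by omega)
    have p2 : 0 < C m k i := hCk i hiq' hik
    -- C(k+1)i * C k i < C(k+1)i * C k (i+1) ≤ C(k+1)(i+1) * C k i
    have h3 : C m (k+1) i * C m k i < C m (k+1) (i+1) * C m k i := by
      calc C m (k+1) i * C m k i < C m (k+1) i * C m k (i+1) :=
            (Nat.mul_lt_mul_left p1).mpr h1
        _ ≤ C m (k+1) (i+1) * C m k i := h2
    exact Nat.lt_of_mul_lt_mul_right h3
  -- sub-step 2
  have sub2 : ∀ ℓ, a ≤ ℓ → ℓ + 1 ≤ k → C m (k+1) (ℓ+2) ≤ C m (k+1) (ℓ+1) := by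
    intro ℓ hal hlk
    have h1 : C m k (ℓ+1) ≤ C m k ℓ := hDec ℓ hal (by omega)
    have h2 := cross2 m k ℓ
    have p1 : 0 < C m k ℓ := hCk ℓ (le_trans haq hal) (by omega)
    have h3 : C m (k+1) (ℓ+2) * C m k ℓ ≤ C m (k+1) (ℓ+1) * C m k ℓ := by
      calc C m (k+1) (ℓ+2) * C m k ℓ ≤ C m (k+1) (ℓ+1) * C m k (ℓ+1) := h2
        _ ≤ C m (k+1) (ℓ+1) * C m k ℓ := Nat.mul_le_mul_left _ h1
    exact Nat.le_of_mul_le_mul_right h3 p1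
  -- basic ranges
  have hq1 : q m (k+1) ≤ a + 1 := le_trans (q_succ_le m hm1 k) (by omega)
  obtain ⟨hbIcc, hbsup⟩ := alpha_mem m hm1 (show 1 ≤ k+1 by omega)
  rw [Finset.mem_Icc] at hbIcc
  set b := alpha m (k+1) with hb
  obtain ⟨hbq, hbk⟩ := hbIcc
  set sup' := (Finset.Icc (q m (k+1)) (k+1)).sup (C m (k+1)) with hsup'
  -- b ≥ a
  have hba : a ≤ b := by
    by_contra hcon
    push_neg at hcon
    have h1 : C m (k+1) b < C m (k+1) (b+1) := sub1 b hbq hcon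
    have h2 : C m (k+1) (b+1) ≤ sup' := by
      apply Finset.le_sup
      rw [Finset.mem_Icc]
      omega
    omega
  -- decreasing chain
  have hchain : ∀ j, a + 1 ≤ j → j ≤ k + 1 → C m (k+1) j ≤ C m (k+1) (a+1) := by
    intro j hj
    induction j, hj using Nat.le_induction with
    | base => intro _; exact le_rfl
    | succ j hj ih =>
      intro hjk
      have h1 : C m (k+1) (j+1) ≤ C m (k+1) j := by
        obtain ⟨ℓ, rfl⟩ : ∃ ℓ, j = ℓ + 1 := ⟨j - 1, by omega⟩
        exact sub2 ℓ (by omega) (by omega)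
      exact le_trans h1 (ih (by omega))
  -- b ≤ a + 1
  have hba1 : b ≤ a + 1 := by
    by_cases hcase : b ≤ a + 1
    · exact hcase
    · push_neg at hcase
      have h1 : C m (k+1) b ≤ C m (k+1) (a+1) := hchain b (by omega) hbk
      have h2 : C m (k+1) (a+1) ≤ sup' := by
        apply Finset.le_sup
        rw [Finset.mem_Icc]
        omega
      have h3 : C m (k+1) (a+1) = sup' := by omega
      exact alpha_le m hm1 (by rw [Finset.mem_Icc]; omega) h3
  refine ⟨?_, ?_, hba, hba1⟩
  · -- Inc (k+1)
    intro i hiq hib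
    rcases Nat.lt_or_ge i a with hia | hia
    · exact sub1 i hiq hia
    · -- i = a, b = a+1
      have hia' : i = a := by omega
      have hbeq : b = i + 1 := by omega
      have h1 : C m (k+1) i ≤ sup' := by
        apply Finset.le_sup
        rw [Finset.mem_Icc]
        omega
      have h2 : C m (k+1) i ≠ sup' := by
        intro heq
        have := alpha_le m hm1 (k := k+1) (by rw [Finset.mem_Icc]; omega) heq
        omega
      have h3 : C m (k+1) (i+1) = sup' := by rw [← hbeq]; exact hbsup
      omega
  · -- Dec (k+1)
    intro j hbj hjk
    rcases Nat.lt_or_ge j a with hja | hja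
    · omega
    · rcases Nat.eq_or_lt_of_le hja with hja' | hja'
      · -- j = a, so b = a
        have hbeq : b = a := by omega
        have h1 : C m (k+1) (a+1) ≤ sup' := by
          apply Finset.le_sup
          rw [Finset.mem_Icc]
          omega
        have h2 : C m (k+1) a = sup' := by rw [← hbeq]; exact hbsup
        have : j = a := hja'.symm
        subst this
        omega
      · obtain ⟨ℓ', rfl⟩ : ∃ ℓ'', j = ℓ'' + 1 := ⟨j - 1, by omega⟩
        exact sub2 ℓ' (by omega) (by omega)

lemma base (hm : 2 ≤ m) : Inc m 1 ∧ Dec m 1 := by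
  have hm1 : 1 ≤ m := by omega
  have hq1 : q m 1 = 1 := by
    unfold q
    rw [show 1 + m - 1 = m by omega]
    exact Nat.div_self (by omega)
  obtain ⟨haIcc, -⟩ := alpha_mem m hm1 (le_refl 1)
  rw [Finset.mem_Icc, hq1] at haIcc
  constructor
  · intro i hiq hia
    rw [hq1] at hiq
    omega
  · intro j haj hjk
    omega

lemma IncDec (hm : 2 ≤ m) : ∀ k, 1 ≤ k → Inc m k ∧ Dec m k := by
  intro k hk
  induction k, hk using Nat.le_induction with
  | base => exact base m hm
  | succ k hk ih =>
    obtain ⟨h1, h2, -, -⟩ := step m hm k hk ih.1 ih.2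
    exact ⟨h1, h2⟩

end Main

theorem stmt_5 (m : ℕ) (hm : 2 ≤ m) :
    ∀ k : ℕ, 2 ≤ k → alpha m (k - 1) ≤ alpha m k ∧ alpha m k ≤ alpha m (k - 1) + 1 := by
  intro k hk
  obtain ⟨n, rfl⟩ : ∃ n, k = n + 2 := ⟨k - 2, by omega⟩
  have h := IncDec m hm (n+1) (by omega)
  obtain ⟨-, -, h1, h2⟩ := step m hm (n+1) (by omega) h.1 h.2
  have e : n + 2 - 1 = n + 1 := rfl
  rw [e]
  exact ⟨h1, h2⟩
end

section
/- For integers 1 ≤ j < r ≤ m and ℓ ≥ 1, the set S_{j,ℓ,r} = { i ∈ ℤ : 0 ≤ i ≤ r−1 and C(r−1, i) − C(r−j−1, i) ≥ ℓ } is an interval of consecutive integers. -/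
private lemma step_lemma (K t : ℕ) (ht : t + 2 ≤ 2*(K+1)) :
    (2*(K+1)+1-t) * t.choose (K+1) + t.choose K ≤ (2*(K+1)-t) * (t+1).choose (K+1) := by
  have hpascal : (t+1).choose (K+1) = t.choose K + t.choose (K+1) := Nat.choose_succ_succ t K
  have hle : t.choose (K+1) ≤ t.choose K := by
    have h1 : t.choose (K+1) * (K+1) = t.choose K * (t - K) := Nat.choose_succ_right_eq t K
    have h2 : t.choose K * (t - K) ≤ t.choose K * (K+1) :=
      Nat.mul_le_mul_left _ (by omega)
    exact Nat.le_of_mul_le_mul_right (h1 ▸ h2) (by omega)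
  have hc : 2*(K+1)+1-t = (2*(K+1)-t) + 1 := by omega
  have hc2 : 2 ≤ 2*(K+1)-t := by omega
  rw [hpascal, hc]
  set c := 2*(K+1)-t with hcdef
  set X := t.choose (K+1)
  set Y := t.choose K
  calc (c+1) * X + Y ≤ c * X + Y + Y := by nlinarith
    _ ≤ c * X + c * Y := by nlinarith
    _ = c * (Y + X) := by ring

private lemma Fmono (K : ℕ) : ∀ s t : ℕ, s ≤ t → t ≤ 2*(K+1) - 1 →
    (2*(K+1)+1-s) * s.choose (K+1) ≤ (2*(K+1)+1-t) * t.choose (K+1) := by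
  intro s t hst
  induction t, hst using Nat.le_induction with
  | base => intro _; exact le_rfl
  | succ t ht ih =>
    intro h
    have h1 := ih (by omega)
    have h2 := step_lemma K t (by omega)
    have h3 : 2*(K+1)+1-(t+1) = 2*(K+1)-t := by omega
    rw [h3]
    exact h1.trans (le_trans (Nat.le_add_right _ _) h2)

private lemma keyU (n m K : ℕ) (hmn : m < n) (hn : n + 1 ≤ 2*(K+1)) (hkn : K + 2 ≤ n) :
    (2*(K+1)+1-m) * m.choose (K+1) < (2*(K+1)+1-n) * n.choose (K+1) := by
  obtain ⟨t, rfl⟩ : ∃ t, n = t + 1 := ⟨n-1, by omega⟩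
  have h1 := Fmono K m t (by omega) (by omega)
  have h2 := step_lemma K t (by omega)
  have hpos : 0 < t.choose K := Nat.choose_pos (by omega)
  have h3 : 2*(K+1)+1-(t+1) = 2*(K+1)-t := by omega
  rw [h3]
  exact lt_of_le_of_lt h1 (lt_of_lt_of_le (by omega) h2)

private lemma decr (n m k : ℕ) (hmn : m < n) (hn : n + 1 ≤ 2*k) (hkn : k + 1 ≤ n) :
    n.choose (k+1) + m.choose k < n.choose k + m.choose (k+1) := by
  obtain ⟨K, rfl⟩ : ∃ K, k = K + 1 := ⟨k-1, by omega⟩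
  have h := keyU n m K hmn (by omega) (by omega)
  refine lt_of_mul_lt_mul_right ?_ (Nat.zero_le (K+2))
  rw [add_mul, add_mul, Nat.choose_succ_right_eq n (K+1), Nat.choose_succ_right_eq m (K+1)]
  -- goal : A*(n-(K+1)) + B*(K+2) < A*(K+2) + B*(m-(K+1))
  have h' : ((K+2) - (m-(K+1))) * m.choose (K+1) < ((K+2) - (n-(K+1))) * n.choose (K+1) := by
    calc ((K+2) - (m-(K+1))) * m.choose (K+1)
        ≤ (2*(K+1)+1-m) * m.choose (K+1) := Nat.mul_le_mul_right _ (by omega)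
      _ < (2*(K+1)+1-n) * n.choose (K+1) := h
      _ = ((K+2) - (n-(K+1))) * n.choose (K+1) := by congr 1; omega
  have hu : n - (K+1) ≤ K + 2 := by omega
  have hv : m - (K+1) ≤ K + 2 := by omega
  zify [hu, hv] at h' ⊢
  linarith

private lemma incr (n m k : ℕ) (hmn : m ≤ n) (hn : 2*k + 1 ≤ n) :
    n.choose k + m.choose (k+1) ≤ n.choose (k+1) + m.choose k := by
  refine le_of_mul_le_mul_right ?_ (show 0 < k+1 by omega)
  rw [add_mul, add_mul, Nat.choose_succ_right_eq n k, Nat.choose_succ_right_eq m k]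
  have hA : m.choose k ≤ n.choose k := Nat.choose_le_choose k hmn
  have h1 : k + 1 ≤ n - k := by omega
  rcases le_or_gt (m - k) (k+1) with hv | hv
  · exact add_le_add (Nat.mul_le_mul_left _ h1) (Nat.mul_le_mul_left _ hv)
  · have hp : m - k ≤ n - k := by omega
    zify
    have hA' : (m.choose k : ℤ) ≤ n.choose k := by exact_mod_cast hA
    have hq' : (k+1 : ℤ) ≤ ((m-k : ℕ) : ℤ) := by exact_mod_cast hv.le
    have hp' : ((m-k : ℕ) : ℤ) ≤ ((n-k : ℕ) : ℤ) := by exact_mod_cast hp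
    have hA0 : (0:ℤ) ≤ n.choose k := by positivity
    have f1 : ((n.choose k : ℤ) - m.choose k) * (((m-k:ℕ):ℤ) - (k+1)) ≥ 0 :=
      mul_nonneg (by linarith) (by linarith)
    have f2 : (n.choose k : ℤ) * (((n-k:ℕ):ℤ) - ((m-k:ℕ):ℤ)) ≥ 0 :=
      mul_nonneg hA0 (by linarith)
    nlinarith [f1, f2]

theorem stmt_6 (j ℓ r m : ℕ) (hj : 1 ≤ j) (hjr : j < r) (hrm : r ≤ m) (hℓ : 1 ≤ ℓ) :
    ∀ a b c : ℕ,
      (a ≤ r - 1 ∧ ℓ ≤ Nat.choose (r - 1) a - Nat.choose (r - j - 1) a) →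
      (c ≤ r - 1 ∧ ℓ ≤ Nat.choose (r - 1) c - Nat.choose (r - j - 1) c) →
      a ≤ b → b ≤ c →
      (b ≤ r - 1 ∧ ℓ ≤ Nat.choose (r - 1) b - Nat.choose (r - j - 1) b) := by
  intro a b c ha hc hab hbc
  obtain ⟨ha1, ha2⟩ := ha
  obtain ⟨hc1, hc2⟩ := hc
  have hmn : r - j - 1 < r - 1 := by omega
  refine ⟨le_trans hbc hc1, ?_⟩
  rcases le_or_gt (2*b) (r-1+1) with hb | hb
  · -- non-decreasing from a to b
    have key : ∀ d : ℕ, a ≤ d → 2*d ≤ r-1+1 →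
        ℓ ≤ Nat.choose (r-1) d - Nat.choose (r-j-1) d := by
      intro d had
      induction d, had using Nat.le_induction with
      | base => intro _; exact ha2
      | succ d hd ih =>
        intro h2
        have hi := incr (r-1) (r-j-1) d (by omega) (by omega)
        have hc' := Nat.choose_le_choose (d+1) (show r-j-1 ≤ r-1 by omega)
        have hc0 := Nat.choose_le_choose d (show r-j-1 ≤ r-1 by omega)
        have hih := ih (by omega)
        omega
    exact key b hab hb
  · -- non-increasing from b to c
    have key : ∀ d : ℕ, b ≤ d → d ≤ r-1 →
        Nat.choose (r-1) d - Nat.choose (r-j-1) d ≤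
          Nat.choose (r-1) b - Nat.choose (r-j-1) b := by
      intro d hbd
      induction d, hbd using Nat.le_induction with
      | base => intro _; exact le_rfl
      | succ d hd ih =>
        intro h2
        have hdec := decr (r-1) (r-j-1) d hmn (by omega) (by omega)
        have hc' := Nat.choose_le_choose (d+1) (show r-j-1 ≤ r-1 by omega)
        have hc0 := Nat.choose_le_choose d (show r-j-1 ≤ r-1 by omega)
        have hih := ih (by omega)
        omega
    have := key c hbc hc1
    omega
end

section
/- The finite sequence f(i) = C(r−1, i) − C(r−j−1, i), for i = 0, 1, ..., r−1, is unimodal, where 1 ≤ j < r. -/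
lemma rowinc (k s : ℕ) (h : 2*s+1 ≤ k) : k.choose s ≤ k.choose (s+1) := by
  have h1 := Nat.choose_succ_right_eq k s
  have h2 : k.choose s * (s+1) ≤ k.choose (s+1) * (s+1) := by
    rw [h1]; exact Nat.mul_le_mul_left _ (by omega)
  exact Nat.le_of_mul_le_mul_right h2 (Nat.succ_pos s)

lemma rowdec (k s : ℕ) (h : k ≤ 2*s+1) : k.choose (s+1) ≤ k.choose s := by
  have h1 := Nat.choose_succ_right_eq k s
  have h2 : k.choose (s+1) * (s+1) ≤ k.choose s * (s+1) := by
    rw [h1]; exact Nat.mul_le_mul_left _ (by omega)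
  exact Nat.le_of_mul_le_mul_right h2 (Nat.succ_pos s)

lemma up4 (m i n : ℕ) (hmn : m ≤ n) :
    2*i+1 ≤ n → n.choose i + m.choose (i+1) ≤ n.choose (i+1) + m.choose i := by
  induction n, hmn using Nat.le_induction with
  | base => intro _; omega
  | succ n hn ih =>
    intro h
    rcases Nat.lt_or_ge n (2*i+1) with hc | hc
    · have hn2 : n = 2*i := by omega
      have hsym : (n+1).choose (i+1) = (n+1).choose i := by
        have := Nat.choose_symm (show i+1 ≤ n+1 by omega)
        have he : n+1-(i+1) = i := by omega
        rw [he] at this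
        exact this.symm
      have hdec : m.choose (i+1) ≤ m.choose i := rowdec m i (by omega)
      omega
    · have ih' := ih hc
      cases i with
      | zero =>
        have e1 : (n+1).choose (0+1) = n+1 := Nat.choose_one_right _
        have e2 : (n+1).choose 0 = 1 := Nat.choose_zero_right _
        have e3 : m.choose (0+1) = m := Nat.choose_one_right _
        have e4 : n.choose (0+1) = n := Nat.choose_one_right _
        have e5 : n.choose 0 = 1 := Nat.choose_zero_right _
        have e6 : m.choose 0 = 1 := Nat.choose_zero_right _
        omega
      | succ s =>
        have e1 : (n+1).choose (s+1) = n.choose s + n.choose (s+1) :=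
          Nat.choose_succ_succ n s
        have e2 : (n+1).choose (s+1+1) = n.choose (s+1) + n.choose (s+1+1) :=
          Nat.choose_succ_succ n (s+1)
        have hinc : n.choose s ≤ n.choose (s+1) := rowinc n s (by omega)
        omega

lemma down4 (m i n : ℕ) (hmn : m ≤ n) :
    n+1 ≤ 2*i → n.choose (i+1) + m.choose i ≤ n.choose i + m.choose (i+1) := by
  induction n, hmn using Nat.le_induction with
  | base => intro _; omega
  | succ n hn ih =>
    intro h
    obtain ⟨s, rfl⟩ : ∃ s, i = s+1 := ⟨i-1, by omega⟩
    have ih' := ih (by omega)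
    have e1 : (n+1).choose (s+1) = n.choose s + n.choose (s+1) :=
      Nat.choose_succ_succ n s
    have e2 : (n+1).choose (s+1+1) = n.choose (s+1) + n.choose (s+1+1) :=
      Nat.choose_succ_succ n (s+1)
    have hdec : n.choose (s+1) ≤ n.choose s := rowdec n s (by omega)
    omega

lemma chain (f : ℕ → ℕ) (p : ℕ)
    (hu : ∀ s, s < p → f s ≤ f (s+1)) (hd : ∀ s, p ≤ s → f (s+1) ≤ f s) :
    (∀ i i', i ≤ i' → i' ≤ p → f i ≤ f i') ∧
    (∀ i i', p ≤ i → i ≤ i' → f i' ≤ f i) := by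
  constructor
  · intro i i' h hip
    induction i', h using Nat.le_induction with
    | base => exact le_refl _
    | succ i' h ih => exact le_trans (ih (by omega)) (hu i' (by omega))
  · intro i i' hpi h
    induction i', h using Nat.le_induction with
    | base => exact le_refl _
    | succ i' h ih => exact le_trans (hd i' (by omega)) ih

theorem stmt_7 (j r : ℕ) (hj : 1 ≤ j) (hjr : j < r) :
    ∃ p : ℕ, p ≤ r - 1 ∧
      (∀ i i' : ℕ, i ≤ i' → i' ≤ p →
        Nat.choose (r - 1) i - Nat.choose (r - j - 1) i ≤
          Nat.choose (r - 1) i' - Nat.choose (r - j - 1) i') ∧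
      (∀ i i' : ℕ, p ≤ i → i ≤ i' → i' ≤ r - 1 →
        Nat.choose (r - 1) i' - Nat.choose (r - j - 1) i' ≤
          Nat.choose (r - 1) i - Nat.choose (r - j - 1) i) := by
  set n := r - 1 with hn
  set m := r - j - 1 with hm
  have hmn : m ≤ n := by omega
  have hn1 : 1 ≤ n := by omega
  set f : ℕ → ℕ := fun i => n.choose i - m.choose i with hf
  have hsub : ∀ i, m.choose i ≤ n.choose i := fun i => Nat.choose_le_choose i hmn
  have fup : ∀ s, 2*s+1 ≤ n → f s ≤ f (s+1) := by
    intro s hs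
    have h4 := up4 m s n hmn hs
    have h1 := hsub s; have h2 := hsub (s+1)
    simp only [hf]; omega
  have fdown : ∀ s, n+1 ≤ 2*s → f (s+1) ≤ f s := by
    intro s hs
    have h4 := down4 m s n hmn hs
    have h1 := hsub s; have h2 := hsub (s+1)
    simp only [hf]; omega
  have hq2 : 2*(n/2) ≤ n ∧ n ≤ 2*(n/2)+1 := by omega
  by_cases hb : f (n/2+1) ≤ f (n/2)
  · refine ⟨n/2, by omega, ?_⟩
    have hc := chain f (n/2)
      (fun s hs => fup s (by omega))
      (fun s hs => by
        rcases Nat.eq_or_lt_of_le hs with h | h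
        · rw [← h]; exact hb
        · exact fdown s (by omega))
    exact ⟨fun i i' h hip => hc.1 i i' h hip,
           fun i i' hpi h _ => hc.2 i i' hpi h⟩
  · refine ⟨n/2+1, by omega, ?_⟩
    have hc := chain f (n/2+1)
      (fun s hs => by
        rcases Nat.eq_or_lt_of_le (Nat.lt_succ_iff.mp hs) with h | h
        · rw [h]; exact le_of_lt (lt_of_not_ge hb)
        · exact fup s (by omega))
      (fun s hs => fdown s (by omega))
    exact ⟨fun i i' h hip => hc.1 i i' h hip,
           fun i i' hpi h _ => hc.2 i i' hpi h⟩
end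

section
/- Let k, m ≥ 2 and q = ⌈k/m⌉. Then the smallest index α(k) achieving the maximum of C_{k,q},...,C_{k,k} satisfies α(k) ≤ (k+q)/2. -/
open Finset

/-- A tuple `c` stands for the composition with parts `c i + 1 ∈ {1, …, m}`. -/
def compositions (m k ℓ : ℕ) : Finset (Fin ℓ → Fin m) :=
  univ.filter fun c => ∑ i, ((c i : ℕ) + 1) = k

lemma C_eq_card_compositions (m k ℓ : ℕ) : C m k ℓ = #(compositions m k ℓ) := rfl

variable {m k ℓ : ℕ}

lemma mem_compositions_iff {c : Fin ℓ → Fin m} :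
    c ∈ compositions m k ℓ ↔ ∑ i, (c i : ℕ) + ℓ = k := by
  simp [compositions, sum_add_distrib]

def mergeablePairs (a : Fin (ℓ + 1) → Fin m) : Finset (Fin ℓ) :=
  univ.filter fun j : Fin ℓ => (a j.castSucc : ℕ) + a j.succ + 2 ≤ m

lemma sub_one_mul_card_compl_mergeablePairs_le (a : Fin (ℓ + 1) → Fin m) :
    (m - 1) * #(mergeablePairs a)ᶜ ≤ 2 * ∑ i, (a i : ℕ) :=
  calc (m - 1) * #(mergeablePairs a)ᶜ
      = ∑ _j ∈ (mergeablePairs a)ᶜ, (m - 1) := by rw [sum_const, smul_eq_mul, mul_comm]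
    _ ≤ ∑ j ∈ (mergeablePairs a)ᶜ, ((a j.castSucc : ℕ) + a j.succ) :=
        sum_le_sum fun j hj => by
          simp only [mergeablePairs, mem_compl, mem_filter, mem_univ, true_and] at hj; omega
    _ ≤ ∑ j : Fin ℓ, ((a j.castSucc : ℕ) + a j.succ) := sum_le_sum_of_subset (subset_univ _)
    _ ≤ 2 * ∑ i, (a i : ℕ) := by
        rw [sum_add_distrib, two_mul]
        gcongr
        · rw [Fin.sum_univ_castSucc (fun i => (a i : ℕ))]; omega
        · rw [Fin.sum_univ_succ (fun i => (a i : ℕ))]; omega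

lemma le_card_mergeablePairs {q : ℕ} (hq : k ≤ m * q) (hℓ : k + q ≤ 2 * ℓ + 1)
    {a : Fin (ℓ + 1) → Fin m} (ha : a ∈ compositions m k (ℓ + 1)) :
    k - ℓ ≤ #(mergeablePairs a) := by
  have hsum := mem_compositions_iff.1 ha
  have hbad := sub_one_mul_card_compl_mergeablePairs_le a
  have hcompl := card_compl (mergeablePairs a)
  rw [Fintype.card_fin] at hcompl
  have hlt : 2 * ∑ i, (a i : ℕ) < (m - 1) * q := by
    rw [Nat.sub_one_mul]; omega
  have := lt_of_mul_lt_mul_left (hbad.trans_lt hlt)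
  omega

/-- The merged part is capped at `m - 1` only to stay in `Fin m`; on `mergeablePairs` the cap
is never reached. -/
def mergeAt (a : Fin (ℓ + 1) → Fin m) (j : Fin ℓ) : Fin ℓ → Fin m :=
  Function.update (fun i => a (j.succ.succAbove i)) j
    ⟨min (m - 1) (a j.castSucc + a j.succ + 1), by have := (a j.castSucc).isLt; omega⟩

lemma mergeAt_self {a : Fin (ℓ + 1) → Fin m} {j : Fin ℓ} (hj : j ∈ mergeablePairs a) :
    (mergeAt a j j : ℕ) = a j.castSucc + a j.succ + 1 := by
  simp only [mergeablePairs, mem_filter, mem_univ, true_and] at hj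
  simp only [mergeAt, Function.update_self]
  omega

lemma mergeAt_of_ne {a : Fin (ℓ + 1) → Fin m} {i j : Fin ℓ} (h : i ≠ j) :
    mergeAt a j i = a (j.succ.succAbove i) :=
  Function.update_of_ne h _ _

lemma sum_mergeAt {a : Fin (ℓ + 1) → Fin m} {j : Fin ℓ} (hj : j ∈ mergeablePairs a) :
    ∑ i, (mergeAt a j i : ℕ) = ∑ i, (a i : ℕ) + 1 := by
  have hmerged : ∑ i, (mergeAt a j i : ℕ)
      = mergeAt a j j + ∑ i ∈ univ.erase j, (a (j.succ.succAbove i) : ℕ) := by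
    rw [← add_sum_erase _ _ (mem_univ j)]
    exact congrArg _ (sum_congr rfl fun i hi => by rw [mergeAt_of_ne (ne_of_mem_erase hi)])
  have hremoved : ∑ i, (a (j.succ.succAbove i) : ℕ)
      = a j.castSucc + ∑ i ∈ univ.erase j, (a (j.succ.succAbove i) : ℕ) := by
    rw [← add_sum_erase _ _ (mem_univ j), Fin.succAbove_succ_self]
  have hsplit : ∑ i, (a i : ℕ) = a j.succ + ∑ i, (a (j.succ.succAbove i) : ℕ) :=
    Fin.sum_univ_succAbove _ _
  rw [hsplit, hremoved, hmerged, mergeAt_self hj]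
  ring

lemma update_mergeAt_self (a : Fin (ℓ + 1) → Fin m) (j : Fin ℓ) :
    Function.update (mergeAt a j) j (a j.castSucc) = Fin.removeNth j.succ a := by
  ext i : 1
  rcases eq_or_ne i j with rfl | h
  · simp [Fin.removeNth]
  · simp [Function.update_of_ne h, mergeAt_of_ne h, Fin.removeNth]

lemma eq_of_mergeAt_eq {a a' : Fin (ℓ + 1) → Fin m} {j : Fin ℓ} (ha : j ∈ mergeablePairs a)
    (ha' : j ∈ mergeablePairs a') (h : mergeAt a j = mergeAt a' j)
    (hfirst : a j.castSucc = a' j.castSucc) : a = a' := by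
  have hsecond : a j.succ = a' j.succ := by
    have := congrArg (fun c => (c j : ℕ)) h
    simp only [mergeAt_self ha, mergeAt_self ha', hfirst] at this
    exact Fin.ext (by omega)
  have hrest : Fin.removeNth j.succ a = Fin.removeNth j.succ a' := by
    rw [← update_mergeAt_self, ← update_mergeAt_self, h, hfirst]
  rw [← Fin.insertNth_self_removeNth j.succ a, ← Fin.insertNth_self_removeNth j.succ a',
    hsecond, hrest]

/-- `⟨j, x⟩` cuts part `j` (of size `c j + 1`) into parts of sizes `x + 1` and `c j - x`. -/
def splitPoints (c : Fin ℓ → Fin m) : Finset (Σ _ : Fin ℓ, Fin m) :=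
  univ.sigma fun j => Iio (c j)

lemma card_splitPoints (c : Fin ℓ → Fin m) : #(splitPoints c) = ∑ j, (c j : ℕ) := by
  simp [splitPoints, card_sigma]

lemma C_succ_le {q : ℕ} (hℓk : ℓ < k) (hq : k ≤ m * q) (hℓ : k + q ≤ 2 * ℓ + 1) :
    C m k (ℓ + 1) ≤ C m k ℓ := by
  have hmarked :
      C m k (ℓ + 1) * (k - ℓ) ≤ #((compositions m k (ℓ + 1)).sigma mergeablePairs) := by
    rw [card_sigma, C_eq_card_compositions, ← smul_eq_mul]
    exact card_nsmul_le_sum _ _ _ fun a ha => le_card_mergeablePairs hq hℓ ha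
  have hsplit : #((compositions m k ℓ).sigma splitPoints) = C m k ℓ * (k - ℓ) := by
    rw [card_sigma, C_eq_card_compositions]
    refine sum_const_nat fun c hc => ?_
    have := mem_compositions_iff.1 hc
    rw [card_splitPoints]
    omega
  have hmerge : #((compositions m k (ℓ + 1)).sigma mergeablePairs)
      ≤ #((compositions m k ℓ).sigma splitPoints) := by
    refine card_le_card_of_injOn (fun p => ⟨mergeAt p.1 p.2, p.2, p.1 p.2.castSucc⟩) ?_ ?_
    · rintro ⟨a, j⟩ h
      simp only [coe_sigma, Set.mem_sigma_iff, mem_coe] at h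
      obtain ⟨ha, hj⟩ := h
      simp only [coe_sigma, Set.mem_sigma_iff, mem_coe, splitPoints, mem_univ,
        mem_Iio, true_and, mem_compositions_iff]
      refine ⟨?_, ?_⟩
      · rw [sum_mergeAt hj]; have := mem_compositions_iff.1 ha; omega
      · rw [Fin.lt_def, mergeAt_self hj]; omega
    · rintro ⟨a, j⟩ h ⟨a', j'⟩ h' heq
      simp only [coe_sigma, Set.mem_sigma_iff, mem_coe] at h h'
      simp only [Sigma.mk.injEq, heq_eq_eq] at heq
      obtain ⟨hmerge, rfl, hfirst⟩ := heq
      rw [eq_of_mergeAt_eq h.2 h'.2 hmerge hfirst]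
  exact Nat.le_of_mul_le_mul_right (hmarked.trans (hmerge.trans_eq hsplit)) (by omega)

lemma C_le_C_of_le {q L j : ℕ} (hq : k ≤ m * q) (hL : k + q ≤ 2 * L + 1) (hLj : L ≤ j)
    (hjk : j ≤ k) : C m k j ≤ C m k L := by
  induction j, hLj using Nat.le_induction with
  | base => rfl
  | succ n hLn ih => exact (C_succ_le (by omega) hq (by omega)).trans (ih (by omega))

lemma sInf_setOf_eq_sup_le {s : Finset ℕ} {f : ℕ → ℕ} {L : ℕ} (hL : L ∈ s)
    (h : ∀ j ∈ s, L < j → f j ≤ f L) : sInf {i | i ∈ s ∧ f i = s.sup f} ≤ L := by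
  obtain ⟨i, hi, hmax⟩ := exists_mem_eq_sup s ⟨L, hL⟩ f
  rcases le_or_gt i L with hiL | hLi
  · exact (Nat.sInf_le (s := {i | i ∈ s ∧ f i = s.sup f}) ⟨hi, hmax.symm⟩).trans hiL
  · exact Nat.sInf_le ⟨hL, le_antisymm (le_sup hL) (hmax ▸ h i hi hLi)⟩

theorem stmt_9_general (k m : ℕ) (hm : 2 ≤ m) :
    2 * alpha m k ≤ k + (k + m - 1) / m := by
  have hm0 : 0 < m := by omega
  set q := (k + m - 1) / m
  have hq : k ≤ m * q := le_smul_ceilDiv hm0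
  have hqk : q ≤ k := (ceilDiv_le_iff_le_mul hm0).2 (Nat.le_mul_of_pos_left k hm0)
  have : alpha m k ≤ (k + q) / 2 :=
    sInf_setOf_eq_sup_le (mem_Icc.2 ⟨by omega, by omega⟩)
      fun j hj _ => C_le_C_of_le hq (by omega) (by omega) (mem_Icc.1 hj).2
  omega

theorem stmt_9 (k m : ℕ) (hk : 2 ≤ k) (hm : 2 ≤ m) :
    2 * alpha m k ≤ k + (k + m - 1) / m :=
  stmt_9_general k m hm
end

section
/- Let k, m ≥ 2 and q = ⌈k/m⌉. Suppose C_{k,q+d} ≥ C_{k,k−d} for all integers 0 ≤ d ≤ (k−q)/2. Let S_1, S_2 be finite intervals of positive integers with |S_1| = |S_2|, min S_1 + max S_2 ≥ k + q, and min S_1 ≤ min S_2. Then ∑_{i ∈ S_1} C_{k,i} ≥ ∑_{i ∈ S_2} C_{k,i}. -/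
open Finset

section LogConcave

variable {R : Type*} [CommRing R]

def windowSum (m : ℕ) (F : ℤ → R) (x : ℤ) : R := ∑ c ∈ range m, F (x - (c + 1))

theorem windowSum_sub_one (m : ℕ) (F : ℤ → R) (x : ℤ) :
    windowSum m F (x - 1) + F (x - 1) = windowSum m F x + F (x - (m + 1)) := by
  have h := (sum_range_succ' (fun c : ℕ => F (x - (c + 1))) m).symm.trans
    (sum_range_succ (fun c : ℕ => F (x - (c + 1))) m)
  simp only [windowSum]
  convert h using 2 <;> push_cast <;> ring_nf

variable [LinearOrder R]

/-- For nonnegative sequences this is log-concavity without internal zeros; unlike the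
three-term form `F (x - 1) * F (x + 1) ≤ F x ^ 2`, it is preserved by `windowSum`. -/
def IsLogConcaveSeq (F : ℤ → R) : Prop :=
  ∀ ⦃x y z w : ℤ⦄, x ≤ y → x ≤ z → x + w = y + z → F x * F w ≤ F y * F z

theorem isLogConcaveSeq_of_step {F : ℤ → R}
    (h : ∀ s t, s ≤ t → F (s - 1) * F (t + 1) ≤ F s * F t) : IsLogConcaveSeq F := by
  have spread : ∀ d : ℕ, ∀ y z, y ≤ z → F (y - d) * F (z + d) ≤ F y * F z := by
    intro d
    induction d with
    | zero => simp
    | succ d ih =>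
      intro y z hyz
      calc F (y - ↑(d + 1)) * F (z + ↑(d + 1))
          = F (y - d - 1) * F (z + d + 1) := by push_cast; ring_nf
        _ ≤ F (y - d) * F (z + d) := h _ _ (by omega)
        _ ≤ F y * F z := ih y z hyz
  intro x y z w hxy hxz hsum
  rcases le_total y z with hyz | hzy
  · have := spread (y - x).toNat y z hyz
    rwa [show y - (y - x).toNat = x by omega, show z + (y - x).toNat = w by omega] at this
  · have := spread (z - x).toNat z y hzy
    rwa [show z - (z - x).toNat = x by omega, show y + (z - x).toNat = w by omega,
      mul_comm (F z)] at this

variable [IsStrictOrderedRing R]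

theorem isLogConcaveSeq_indicator_zero :
    IsLogConcaveSeq (fun x : ℤ => if x = 0 then (1 : R) else 0) := by
  intro x y z w hxy hxz hsum
  by_cases hx : x = 0 <;> by_cases hw : w = 0
  · simp [hx, hw, show y = 0 by omega, show z = 0 by omega]
  all_goals simp only [hx, hw, if_false, mul_zero, zero_mul]; split_ifs <;> norm_num

theorem IsLogConcaveSeq.windowSum {F : ℤ → R} (hF : IsLogConcaveSeq F) (m : ℕ) :
    IsLogConcaveSeq (_root_.windowSum m F) := by
  refine isLogConcaveSeq_of_step fun s t hst => ?_
  -- Telescoping `windowSum` at `s - 1` and `t + 1` reduces the claim to a termwise comparison.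
  have key : F t * _root_.windowSum m F s + F (s - (m + 1)) * _root_.windowSum m F (t + 1) ≤
      F (s - 1) * _root_.windowSum m F (t + 1) + F (t - m) * _root_.windowSum m F s := by
    simp only [_root_.windowSum, mul_sum, ← sum_add_distrib]
    refine sum_le_sum fun c hc => add_le_add ?_ ?_
    · rw [mul_comm]
      exact hF (by omega) (by omega) (by ring)
    · exact hF (by simp at hc; omega) (by simp at hc; omega) (by ring)
  have hs := windowSum_sub_one m F s
  have ht := windowSum_sub_one m F (t + 1)
  simp only [add_sub_cancel_right, show t + 1 - (m + 1) = t - m by ring] at ht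
  rw [eq_sub_of_add_eq hs, eq_sub_of_add_eq ht]
  linarith

theorem IsLogConcaveSeq.mul_windowSum_windowSum_le {F : ℤ → R} (hF : IsLogConcaveSeq F)
    (m : ℕ) (x : ℤ) :
    F x * _root_.windowSum m (_root_.windowSum m F) x ≤ _root_.windowSum m F x ^ 2 := by
  simp only [_root_.windowSum, sq, mul_sum, sum_mul]
  refine sum_le_sum fun c _ => sum_le_sum fun c' _ => ?_
  rw [mul_comm]
  exact hF (by omega) (by omega) (by ring)

end LogConcave

section UnimodalSeq

variable {R : Type*} [Semiring R] [LinearOrder R] [IsStrictOrderedRing R]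

theorem antitoneOn_Icc_of_logConcave {u : ℕ → R} (hlc : ∀ n, u n * u (n + 2) ≤ u (n + 1) ^ 2)
    {t b : ℕ} (hpos : ∀ n, t < n → n ≤ b → 0 < u n) (ht : u (t + 1) ≤ u t) :
    AntitoneOn u (Set.Icc t b) := by
  have step : ∀ n, t ≤ n → n + 1 ≤ b → u (n + 1) ≤ u n := by
    intro n hn
    induction n, hn using Nat.le_induction with
    | base => exact fun _ => ht
    | succ n hn ih =>
      intro hnb
      have h₁ : 0 < u (n + 1) := hpos _ (by omega) (by omega)
      have h₂ : 0 < u (n + 2) := hpos _ (by omega) hnb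
      refine le_of_mul_le_mul_left ?_ h₁
      calc u (n + 1) * u (n + 2) ≤ u n * u (n + 2) :=
            mul_le_mul_of_nonneg_right (ih (by omega)) h₂.le
        _ ≤ u (n + 1) * u (n + 1) := (hlc n).trans_eq (sq _)
  exact antitoneOn_of_add_one_le Set.ordConnected_Icc fun n _ hn hn₁ => step n hn.1 hn₁.2

theorem min_le_of_logConcave {u : ℕ → R} (hlc : ∀ n, u n * u (n + 2) ≤ u (n + 1) ^ 2)
    {a b j : ℕ} (hpos : ∀ n, a ≤ n → n ≤ b → 0 < u n) (haj : a ≤ j) (hjb : j ≤ b) :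
    min (u a) (u b) ≤ u j := by
  by_contra! h
  obtain ⟨t, hat, htj, ht⟩ : ∃ t, a ≤ t ∧ t < j ∧ u (t + 1) < u t := by
    by_contra! hmono
    have : MonotoneOn u (Set.Icc a j) :=
      monotoneOn_of_le_add_one Set.ordConnected_Icc fun n _ hn hn₁ => hmono n hn.1 hn₁.2
    exact (lt_min_iff.mp h).1.not_ge (this ⟨le_rfl, haj⟩ ⟨haj, le_rfl⟩ haj)
  have := antitoneOn_Icc_of_logConcave hlc (b := b) (fun n hn hnb => hpos n (by omega) hnb) ht.le
  exact (lt_min_iff.mp h).2.not_ge (this ⟨htj.le, hjb⟩ ⟨by omega, le_rfl⟩ hjb)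

theorem le_of_add_le_of_logConcave {u : ℕ → R} (hnn : ∀ n, 0 ≤ u n)
    (hlc : ∀ n, u n * u (n + 2) ≤ u (n + 1) ^ 2) {q k : ℕ}
    (hpos : ∀ n, q ≤ n → n ≤ k → 0 < u n) (hzero : ∀ n, k < n → u n = 0)
    (hsymm : ∀ d, 2 * d ≤ k - q → u (k - d) ≤ u (q + d))
    {i j : ℕ} (hji : j ≤ i) (hij : k + q ≤ i + j) : u i ≤ u j := by
  rcases lt_or_ge k i with hki | hik
  · exact (hzero i hki).trans_le (hnn j)
  · have hd := hsymm (k - i) (by omega)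
    rw [Nat.sub_sub_self hik] at hd
    calc u i = min (u (q + (k - i))) (u i) := (min_eq_right hd).symm
      _ ≤ u j := min_le_of_logConcave hlc (fun n h₁ h₂ => hpos n (by omega) (by omega))
          (by omega) hji

end UnimodalSeq

theorem sum_Icc_le_sum_Icc_of_le_of_add_le {M : Type*} [AddCommMonoid M] [PartialOrder M]
    [IsOrderedAddMonoid M] {u : ℕ → M} {s : ℕ} (hu : ∀ i j, j ≤ i → s ≤ i + j → u i ≤ u j)
    {a₁ b₁ a₂ b₂ : ℕ} (hcard : #(Icc a₁ b₁) = #(Icc a₂ b₂)) (hs : s ≤ a₁ + b₂)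
    (hmin : a₁ ≤ a₂) : ∑ i ∈ Icc a₂ b₂, u i ≤ ∑ i ∈ Icc a₁ b₁, u i := by
  rw [Nat.card_Icc, Nat.card_Icc] at hcard
  rw [← sum_inter_add_sum_sdiff (Icc a₂ b₂) (Icc a₁ b₁),
    ← sum_inter_add_sum_sdiff (Icc a₁ b₁) (Icc a₂ b₂), inter_comm]
  gcongr _ + ?_
  -- The reflection `i ↦ a₁ + b₂ - i` exchanges the two set differences.
  calc ∑ i ∈ Icc a₂ b₂ \ Icc a₁ b₁, u i ≤ ∑ i ∈ Icc a₂ b₂ \ Icc a₁ b₁, u (a₁ + b₂ - i) :=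
        sum_le_sum fun i hi => hu _ _ (by simp at hi; omega) (by simp at hi; omega)
    _ = ∑ j ∈ Icc a₁ b₁ \ Icc a₂ b₂, u j :=
        sum_nbij' (a₁ + b₂ - ·) (a₁ + b₂ - ·) (fun i hi => by simp at hi ⊢; omega)
          (fun j hj => by simp at hj ⊢; omega) (fun i hi => by simp at hi; omega)
          (fun j hj => by simp at hj; omega) fun _ _ => rfl

/-- `C m k ℓ`, extended to integer totals so that the recursion in `ℓ` avoids truncated
subtraction. -/
def compositionCount (m ℓ : ℕ) (x : ℤ) : ℕ :=
  #{f : Fin ℓ → Fin m | ∑ i, ((f i : ℤ) + 1) = x}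

theorem C_eq_compositionCount (m k ℓ : ℕ) : C m k ℓ = compositionCount m ℓ k := by
  unfold C compositionCount
  congr! 3 with f
  exact_mod_cast Iff.rfl

theorem compositionCount_zero (m : ℕ) (x : ℤ) :
    compositionCount m 0 x = if x = 0 then 1 else 0 := by
  by_cases hx : x = 0 <;> simp [compositionCount, hx, eq_comm]

theorem compositionCount_succ (m ℓ : ℕ) (x : ℤ) :
    compositionCount m (ℓ + 1) x = ∑ c ∈ range m, compositionCount m ℓ (x - (c + 1)) := by
  simp only [compositionCount, card_filter]
  rw [← (Fin.consEquiv fun _ => Fin m).sum_comp, Fintype.sum_prod_type]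
  refine Eq.trans ?_ (Fin.sum_univ_eq_sum_range _ m)
  refine sum_congr rfl fun v _ => sum_congr rfl fun g _ => ?_
  simp [Fin.consEquiv, Fin.sum_univ_succ, eq_sub_iff_add_eq', add_comm]

theorem cast_compositionCount_succ (m ℓ : ℕ) :
    (fun x => (compositionCount m (ℓ + 1) x : ℤ)) =
      windowSum m (fun x => (compositionCount m ℓ x : ℤ)) := by
  ext x
  simp [compositionCount_succ, windowSum]

theorem compositionCount_eq_zero {m ℓ : ℕ} {x : ℤ} (hx : x < ℓ) :
    compositionCount m ℓ x = 0 := by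
  refine card_eq_zero.mpr (filter_eq_empty_iff.mpr fun f _ hf => hx.not_ge ?_)
  simpa [← hf] using card_nsmul_le_sum univ (fun i => (f i : ℤ) + 1) 1 (by simp)

theorem compositionCount_pos {m ℓ : ℕ} {x : ℤ} (h₁ : ℓ ≤ x) (h₂ : x ≤ m * ℓ) :
    0 < compositionCount m ℓ x := by
  induction ℓ generalizing x with
  | zero => simp [compositionCount_zero, show x = 0 by omega]
  | succ ℓ ih =>
    rw [compositionCount_succ]
    -- A first part `c + 1` with `c = max 0 (x - 1 - m ℓ)` leaves a total in `[ℓ, m ℓ]`.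
    obtain ⟨c, hc, hℓ, hm⟩ : ∃ c < m, (ℓ : ℤ) ≤ x - (c + 1) ∧ x - (c + 1) ≤ m * ℓ := by
      have hm : 0 < m := Nat.pos_of_ne_zero fun h => by subst h; push_cast at h₁ h₂; omega
      have hℓm : (ℓ : ℤ) ≤ m * ℓ := le_mul_of_one_le_left (by positivity) (by exact_mod_cast hm)
      push_cast at h₁ h₂
      rw [mul_add_one] at h₂
      generalize (m : ℤ) * ℓ = P at *
      exact ⟨(x - 1 - P).toNat, by omega, by omega, by omega⟩
    exact (ih hℓ hm).trans_le <|
      single_le_sum (f := fun c : ℕ => compositionCount m ℓ (x - (c + 1)))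
        (fun _ _ => Nat.zero_le _) (mem_range.mpr hc)

theorem isLogConcaveSeq_compositionCount (m ℓ : ℕ) :
    IsLogConcaveSeq (fun x => (compositionCount m ℓ x : ℤ)) := by
  induction ℓ with
  | zero =>
    convert isLogConcaveSeq_indicator_zero (R := ℤ) using 2 with x
    simp [compositionCount_zero]
  | succ ℓ ih => simpa only [cast_compositionCount_succ] using ih.windowSum m

theorem C_mul_C_le_sq (m k ℓ : ℕ) : C m k ℓ * C m k (ℓ + 2) ≤ C m k (ℓ + 1) ^ 2 := by
  have := (isLogConcaveSeq_compositionCount m ℓ).mul_windowSum_windowSum_le m k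
  simp only [← cast_compositionCount_succ] at this
  simp only [C_eq_compositionCount]
  exact_mod_cast this

theorem C_pos_s12 {m k ℓ : ℕ} (h₁ : ℓ ≤ k) (h₂ : k ≤ m * ℓ) : 0 < C m k ℓ := by
  rw [C_eq_compositionCount]
  exact compositionCount_pos (by exact_mod_cast h₁) (by exact_mod_cast h₂)

theorem C_eq_zero {m k ℓ : ℕ} (h : k < ℓ) : C m k ℓ = 0 := by
  rw [C_eq_compositionCount]
  exact compositionCount_eq_zero (by exact_mod_cast h)

theorem stmt_12_general (k m : ℕ) (hm : 2 ≤ m)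
    (hC : ∀ d : ℕ, 2 * d ≤ k - (k + m - 1) / m →
      C m k (k - d) ≤ C m k ((k + m - 1) / m + d))
    (a₁ b₁ a₂ b₂ : ℕ)
    (hcard : (Finset.Icc a₁ b₁).card = (Finset.Icc a₂ b₂).card)
    (hsum : k + (k + m - 1) / m ≤ a₁ + b₂) (hmin : a₁ ≤ a₂) :
    ∑ i ∈ Finset.Icc a₂ b₂, C m k i ≤ ∑ i ∈ Finset.Icc a₁ b₁, C m k i := by
  have hceil : ∀ ℓ, (k + m - 1) / m ≤ ℓ → k ≤ m * ℓ := fun ℓ h => by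
    rw [Nat.div_le_iff_le_mul_add_pred (by omega)] at h
    omega
  refine sum_Icc_le_sum_Icc_of_le_of_add_le (fun i j hji hij => ?_) hcard hsum hmin
  exact le_of_add_le_of_logConcave (fun _ => Nat.zero_le _) (C_mul_C_le_sq m k)
    (fun ℓ h₁ h₂ => C_pos_s12 h₂ (hceil ℓ h₁)) (fun _ => C_eq_zero) hC hji hij

theorem stmt_12 (k m : ℕ) (hk : 2 ≤ k) (hm : 2 ≤ m)
    (hC : ∀ d : ℕ, 2 * d ≤ k - (k + m - 1) / m →
      C m k (k - d) ≤ C m k ((k + m - 1) / m + d))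
    (a₁ b₁ a₂ b₂ : ℕ) (ha₁ : 1 ≤ a₁) (ha₂ : 1 ≤ a₂)
    (h₁ : a₁ ≤ b₁) (h₂ : a₂ ≤ b₂)
    (hcard : (Finset.Icc a₁ b₁).card = (Finset.Icc a₂ b₂).card)
    (hsum : k + (k + m - 1) / m ≤ a₁ + b₂) (hmin : a₁ ≤ a₂) :
    ∑ i ∈ Finset.Icc a₂ b₂, C m k i ≤ ∑ i ∈ Finset.Icc a₁ b₁, C m k i :=
  stmt_12_general k m hm hC a₁ b₁ a₂ b₂ hcard hsum hmin
end

section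
/- Let m ≥ 2, k > m with q = ⌈k/m⌉ and n = k + q; suppose m divides k. Then there exists an intersecting family 𝓐 of k-multisets of [n]_m with |𝓐| = |𝓕_{0,1}^{(m)}| such that 𝓐 is not of the form of all k-multisets containing a fixed element (under any permutation of [n]). -/
attribute [local instance] Classical.propDecidable

def IsKMultiset {n m : ℕ} (k : ℕ) (f : Fin n → Fin (m + 1)) : Prop :=
  ∑ i, (f i : ℕ) = k

def MIntersect {n m : ℕ} (f g : Fin n → Fin (m + 1)) : Prop :=
  ∃ i, 1 ≤ (f i : ℕ) ∧ 1 ≤ (g i : ℕ)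

noncomputable def star (n m k : ℕ) (x : Fin n) : Finset (Fin n → Fin (m + 1)) :=
  Finset.univ.filter (fun f => IsKMultiset k f ∧ 1 ≤ ((f x : Fin (m + 1)) : ℕ))

lemma sum_ite_interval (c a b N : ℕ) :
    ∑ i ∈ Finset.range N, (if a ≤ i ∧ i < b then c else 0) = c * (min b N - min a N) := by
  induction N with
  | zero => simp
  | succ N ih =>
    rw [Finset.sum_range_succ, ih]
    split_ifs with h
    · have h1 : min b (N+1) - min a (N+1) = (min b N - min a N) + 1 := by omega
      rw [h1, mul_add, mul_one]
    · have h1 : min b (N+1) - min a (N+1) = min b N - min a N := by omega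
      rw [h1, add_zero]

/-- `m` on the first `t` coordinates. -/
def wA (n m t : ℕ) : Fin n → Fin (m + 1) :=
  fun i => ⟨if (i : ℕ) < t then m else 0, by split_ifs <;> omega⟩

/-- `1` on coordinates `≥ t`. -/
def wB (n m t : ℕ) : Fin n → Fin (m + 1) :=
  fun i => ⟨if t ≤ (i : ℕ) then min 1 m else 0, by split_ifs <;> omega⟩

/-- `m` at `x` and on coordinates `1,…,t-1`. -/
def wC (n m t x : ℕ) : Fin n → Fin (m + 1) :=
  fun i => ⟨if (i : ℕ) = x ∨ (1 ≤ (i : ℕ) ∧ (i : ℕ) < t) then m else 0, by split_ifs <;> omega⟩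

theorem stmt_17 (k m n : ℕ) (hm : 2 ≤ m) (hk : m < k) (hdvd : m ∣ k)
    (hn : n = k + (k + m - 1) / m) :
    ∃ 𝓐 : Finset (Fin n → Fin (m + 1)),
      (∀ f ∈ 𝓐, IsKMultiset k f) ∧
      (∀ f ∈ 𝓐, ∀ g ∈ 𝓐, MIntersect f g) ∧
      𝓐.card = (star n m k
        ⟨0, hn ▸ lt_of_lt_of_le (by omega) (Nat.le_add_right k ((k + m - 1) / m))⟩).card ∧
      ∀ x : Fin n, 𝓐 ≠ star n m k x := by
  obtain ⟨t, ht⟩ := hdvd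
  have hm0 : 0 < m := by omega
  have ht2 : 2 ≤ t := by
    rcases Nat.lt_or_ge t 2 with h | h
    · interval_cases t <;> omega
    · exact h
  have hceil : (k + m - 1) / m = t := by
    rw [ht]
    have h1 : m * t + m - 1 = (m - 1) + t * m := by rw [mul_comm m t]; omega
    rw [h1, Nat.add_mul_div_right _ _ hm0, Nat.div_eq_of_lt (by omega)]
    omega
  have hnq : n = k + t := by rw [hn, hceil]
  have hkm : 2 * m ≤ k := by
    rw [ht]; calc 2 * m = m * 2 := by ring
    _ ≤ m * t := Nat.mul_le_mul_left m ht2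
  have htn : t ≤ n := by omega
  have h0n : 0 < n := by omega
  have hmin1 : min 1 m = 1 := by omega
  have hms : m * (t - 1) + m = m * t := by
    cases t with
    | zero => omega
    | succ s => rw [Nat.succ_sub_one, Nat.mul_succ]
  set x0 : Fin n := ⟨0, hn ▸ lt_of_lt_of_le (by omega) (Nat.le_add_right k ((k + m - 1) / m))⟩
    with hx0
  have hx0v : (x0 : ℕ) = 0 := rfl
  set f0 : Fin n → Fin (m + 1) := wA n m t with hf0
  set g0 : Fin n → Fin (m + 1) := wB n m t with hg0
  have hf0v : ∀ i : Fin n, (f0 i : ℕ) = if (i : ℕ) < t then m else 0 := fun _ => rfl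
  have hg0v : ∀ i : Fin n, (g0 i : ℕ) = if t ≤ (i : ℕ) then min 1 m else 0 := fun _ => rfl
  have hmemstar : ∀ (y : Fin n) (f : Fin n → Fin (m + 1)),
      f ∈ star n m k y ↔ IsKMultiset k f ∧ 1 ≤ (f y : ℕ) := by
    intro y f
    constructor
    · intro hf; exact (Finset.mem_filter.1 hf).2
    · intro hf; exact Finset.mem_filter.2 ⟨Finset.mem_univ f, hf⟩
  have hsumf0 : IsKMultiset k f0 := by
    show ∑ i : Fin n, (f0 i : ℕ) = k
    simp only [hf0v]
    rw [Fin.sum_univ_eq_sum_range (fun j => if j < t then m else 0) n]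
    calc ∑ i ∈ Finset.range n, (if i < t then m else 0)
        = ∑ i ∈ Finset.range n, (if 0 ≤ i ∧ i < t then m else 0) := by
          apply Finset.sum_congr rfl; intro i _; split_ifs <;> omega
      _ = m * (min t n - min 0 n) := sum_ite_interval m 0 t n
      _ = k := by rw [show min t n - min 0 n = t by omega]; exact ht.symm
  have hsumg0 : IsKMultiset k g0 := by
    show ∑ i : Fin n, (g0 i : ℕ) = k
    simp only [hg0v]
    rw [Fin.sum_univ_eq_sum_range (fun j => if t ≤ j then min 1 m else 0) n]
    calc ∑ i ∈ Finset.range n, (if t ≤ i then min 1 m else 0)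
        = ∑ i ∈ Finset.range n, (if t ≤ i ∧ i < n then 1 else 0) := by
          apply Finset.sum_congr rfl; intro i hi
          rw [Finset.mem_range] at hi
          split_ifs <;> omega
      _ = 1 * (min n n - min t n) := sum_ite_interval 1 t n n
      _ = k := by omega
  have hforce : ∀ h : Fin n → Fin (m + 1), IsKMultiset k h →
      (¬ MIntersect h g0) → h = f0 := by
    intro h hkh hdisj
    have hzero : ∀ i : Fin n, t ≤ (i : ℕ) → (h i : ℕ) = 0 := by
      intro i hti
      by_contra hne
      refine hdisj ⟨i, by omega, ?_⟩
      rw [hg0v i, if_pos hti]; omega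
    have hle : ∀ i ∈ (Finset.univ : Finset (Fin n)), (h i : ℕ) ≤ (f0 i : ℕ) := by
      intro i _
      rw [hf0v]
      split_ifs with hc
      · exact Fin.is_le _
      · rw [hzero i (by omega)]
    have heq := (Finset.sum_eq_sum_iff_of_le hle).1 (by rw [hkh, hsumf0])
    funext i
    exact Fin.ext (heq i (Finset.mem_univ i))
  have hf0x0 : 1 ≤ (f0 x0 : ℕ) := by
    rw [hf0v, if_pos (by omega : (x0 : ℕ) < t)]; omega
  have hf0star : f0 ∈ star n m k x0 := (hmemstar x0 f0).2 ⟨hsumf0, hf0x0⟩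
  have hg0x0 : (g0 x0 : ℕ) = 0 := by
    rw [hg0v, if_neg (by omega : ¬ t ≤ (x0 : ℕ))]
  have hg0nstar : g0 ∉ star n m k x0 := by
    intro hcon
    have := ((hmemstar x0 g0).1 hcon).2
    omega
  have hf0neg0 : f0 ≠ g0 := by
    intro hc
    have hval : (f0 x0 : ℕ) = (g0 x0 : ℕ) := by rw [hc]
    omega
  refine ⟨insert g0 ((star n m k x0).erase f0), ?_, ?_, ?_, ?_⟩
  · intro f hf
    rcases Finset.mem_insert.1 hf with rfl | hf
    · exact hsumg0
    · exact ((hmemstar x0 f).1 (Finset.mem_of_mem_erase hf)).1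
  · intro f hf g hg
    rcases Finset.mem_insert.1 hf with rfl | hf <;> rcases Finset.mem_insert.1 hg with rfl | hg
    · refine ⟨⟨t, by omega⟩, ?_, ?_⟩ <;>
        · rw [hg0v, if_pos (le_refl t)]; omega
    · obtain ⟨hne, hgs⟩ := Finset.mem_erase.1 hg
      have hgs' := (hmemstar x0 g).1 hgs
      by_contra hcon
      apply hne
      apply hforce g hgs'.1
      rintro ⟨i, h1, h2⟩
      exact hcon ⟨i, h2, h1⟩
    · obtain ⟨hne, hfs⟩ := Finset.mem_erase.1 hf
      have hfs' := (hmemstar x0 f).1 hfs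
      by_contra hcon
      exact hne (hforce f hfs'.1 hcon)
    · obtain ⟨_, hfs⟩ := Finset.mem_erase.1 hf
      obtain ⟨_, hgs⟩ := Finset.mem_erase.1 hg
      exact ⟨x0, ((hmemstar x0 f).1 hfs).2, ((hmemstar x0 g).1 hgs).2⟩
  · rw [Finset.card_insert_of_notMem (fun h => hg0nstar (Finset.mem_of_mem_erase h)),
      Finset.card_erase_of_mem hf0star]
    have : 0 < (star n m k x0).card := Finset.card_pos.2 ⟨f0, hf0star⟩
    omega
  · intro x heq
    by_cases hx : (x : ℕ) < t
    · have hmem : f0 ∈ star n m k x := by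
        refine (hmemstar x f0).2 ⟨hsumf0, ?_⟩
        rw [hf0v, if_pos hx]; omega
      rw [← heq] at hmem
      rcases Finset.mem_insert.1 hmem with hc | hc
      · exact hf0neg0 hc
      · exact (Finset.mem_erase.1 hc).1 rfl
    · push_neg at hx
      set h' : Fin n → Fin (m + 1) := wC n m t (x : ℕ) with hh'
      have hh'v : ∀ i : Fin n, (h' i : ℕ) =
          if (i : ℕ) = (x : ℕ) ∨ (1 ≤ (i : ℕ) ∧ (i : ℕ) < t) then m else 0 := fun _ => rfl
      have hsumh' : IsKMultiset k h' := by
        show ∑ i : Fin n, (h' i : ℕ) = k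
        simp only [hh'v]
        rw [Fin.sum_univ_eq_sum_range
          (fun j => if j = (x : ℕ) ∨ (1 ≤ j ∧ j < t) then m else 0) n]
        calc ∑ i ∈ Finset.range n, (if i = (x : ℕ) ∨ (1 ≤ i ∧ i < t) then m else 0)
            = ∑ i ∈ Finset.range n,
                ((if i = (x : ℕ) then m else 0) + (if 1 ≤ i ∧ i < t then m else 0)) := by
              apply Finset.sum_congr rfl; intro i _; split_ifs <;> omega
          _ = (∑ i ∈ Finset.range n, if i = (x : ℕ) then m else 0)
              + ∑ i ∈ Finset.range n, (if 1 ≤ i ∧ i < t then m else 0) := Finset.sum_add_distrib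
          _ = m + m * (min t n - min 1 n) := by
              rw [Finset.sum_ite_eq' (Finset.range n) (x : ℕ) (fun _ => m),
                sum_ite_interval m 1 t n]
              simp [x.isLt]
          _ = k := by
              rw [show min t n = t by omega, show min 1 n = 1 by omega, ht]
              omega
      have hmem : h' ∈ star n m k x := by
        refine (hmemstar x h').2 ⟨hsumh', ?_⟩
        rw [hh'v, if_pos (Or.inl rfl)]; omega
      rw [← heq] at hmem
      rcases Finset.mem_insert.1 hmem with hc | hc
      · have hval : (h' x : ℕ) = (g0 x : ℕ) := by rw [hc]
        rw [hh'v, if_pos (Or.inl rfl), hg0v, if_pos hx] at hval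
        omega
      · have hstar := ((hmemstar x0 h').1 (Finset.mem_of_mem_erase hc)).2
        have h0 : (h' x0 : ℕ) = 0 := by
          rw [hh'v, if_neg]
          push_neg
          exact ⟨by omega, fun h => absurd h (by omega)⟩
        omega
end

section
/- For a maximal intersecting family 𝓐 of k-multisets of [n]_m (with n ≥ k + ⌈k/m⌉, k ≥ 2, m ≥ 2), there is a maximal intersecting family 𝓑 of nonempty proper subsets of [n] containing all supports of members of 𝓐, and 𝓐 equals exactly the set of k-multisets of [n]_m whose support belongs to 𝓑. -/
attribute [local instance] Classical.propDecidable

/-- The support of a multiset: the set of its distinct elements. -/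
def msupport {n m : ℕ} (f : Fin n → Fin (m + 1)) : Finset (Fin n) :=
  Finset.univ.filter (fun i => 1 ≤ (f i : ℕ))

def SetIntersecting {n : ℕ} (ℬ : Set (Finset (Fin n))) : Prop :=
  ∀ A ∈ ℬ, ∀ B ∈ ℬ, (A ∩ B).Nonempty

/-- `ℬ` is a maximal intersecting family of nonempty proper subsets of `[n]`. -/
def MaximalIntersecting {n : ℕ} (ℬ : Set (Finset (Fin n))) : Prop :=
  (∀ B ∈ ℬ, B.Nonempty ∧ B ≠ Finset.univ) ∧ SetIntersecting ℬ ∧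
    ∀ B : Finset (Fin n), B.Nonempty → B ≠ Finset.univ → B ∉ ℬ →
      ¬ SetIntersecting (ℬ ∪ {B})

/-!
Two multisets intersect exactly when their supports do, so the supports of the members of `𝓐`
form an intersecting family of nonempty proper subsets of `[n]` (nonempty since each member meets
itself, proper because a support has at most `k < n` elements). Extend it to a maximal intersecting family `ℬ`. A `k`-multiset whose
support lies in `ℬ` meets every member of `𝓐`, so it belongs to `𝓐` by maximality of `𝓐`.
-/

section Multiset

variable {n m : ℕ}

theorem mIntersect_iff_msupport_inter_nonempty (f g : Fin n → Fin (m + 1)) :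
    MIntersect f g ↔ (msupport f ∩ msupport g).Nonempty := by
  simp [MIntersect, msupport, Finset.Nonempty]

theorem card_msupport_le_sum (f : Fin n → Fin (m + 1)) :
    (msupport f).card ≤ ∑ i, (f i : ℕ) :=
  calc (msupport f).card = ∑ _i ∈ msupport f, 1 := Finset.card_eq_sum_ones _
    _ ≤ ∑ i ∈ msupport f, (f i : ℕ) :=
        Finset.sum_le_sum fun _ hi => (Finset.mem_filter.mp hi).2
    _ ≤ ∑ i, (f i : ℕ) := Finset.sum_le_sum_of_subset (Finset.subset_univ _)

theorem IsKMultiset.msupport_ne_univ {k : ℕ} {f : Fin n → Fin (m + 1)} (hf : IsKMultiset k f)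
    (hkn : k < n) : msupport f ≠ Finset.univ := by
  intro h
  have := card_msupport_le_sum f
  rw [h, Finset.card_univ, Fintype.card_fin, hf] at this
  omega

end Multiset

theorem exists_maximalIntersecting_superset {n : ℕ} {𝒮 : Set (Finset (Fin n))}
    (h𝒮 : ∀ B ∈ 𝒮, B.Nonempty ∧ B ≠ Finset.univ) (h𝒮int : SetIntersecting 𝒮) :
    ∃ ℬ, MaximalIntersecting ℬ ∧ 𝒮 ⊆ ℬ := by
  let good : Set (Set (Finset (Fin n))) := fun 𝒞 =>
    (∀ B ∈ 𝒞, B.Nonempty ∧ B ≠ Finset.univ) ∧ SetIntersecting 𝒞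
  obtain ⟨ℬ, h𝒮ℬ, hℬ⟩ := (Set.toFinite good).exists_le_maximal ⟨h𝒮, h𝒮int⟩
  refine ⟨ℬ, ⟨hℬ.prop.1, hℬ.prop.2, fun B hB hBuniv hBℬ hint => hBℬ ?_⟩, h𝒮ℬ⟩
  have hgood : good (ℬ ∪ {B}) := by
    refine ⟨fun C hC => ?_, hint⟩
    rcases hC with hC | rfl
    exacts [hℬ.prop.1 C hC, ⟨hB, hBuniv⟩]
  exact hℬ.le_of_ge hgood Set.subset_union_left (Set.mem_union_right _ rfl)

theorem stmt_19 (k m n : ℕ) (hk : 2 ≤ k) (hm : 2 ≤ m)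
    (hn : k + (k + m - 1) / m ≤ n)
    (𝓐 : Finset (Fin n → Fin (m + 1)))
    (h𝓐k : ∀ f ∈ 𝓐, IsKMultiset k f)
    (h𝓐int : ∀ f ∈ 𝓐, ∀ g ∈ 𝓐, MIntersect f g)
    (h𝓐max : ∀ f : Fin n → Fin (m + 1), IsKMultiset k f → f ∉ 𝓐 →
      ∃ g ∈ 𝓐, ¬ MIntersect f g) :
    ∃ ℬ : Set (Finset (Fin n)), MaximalIntersecting ℬ ∧
      (∀ f ∈ 𝓐, msupport f ∈ ℬ) ∧
      ∀ f : Fin n → Fin (m + 1), (f ∈ 𝓐 ↔ IsKMultiset k f ∧ msupport f ∈ ℬ) := by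
  have hkn : k < n := by
    have : 1 ≤ (k + m - 1) / m := (Nat.one_le_div_iff (by omega)).mpr (by omega)
    omega
  have hsupp : ∀ f ∈ 𝓐, (msupport f).Nonempty ∧ msupport f ≠ Finset.univ := fun f hf =>
    ⟨by simpa using (mIntersect_iff_msupport_inter_nonempty f f).mp (h𝓐int f hf f hf),
      (h𝓐k f hf).msupport_ne_univ hkn⟩
  have hsuppint : SetIntersecting (msupport '' (𝓐 : Set (Fin n → Fin (m + 1)))) := by
    rintro _ ⟨f, hf, rfl⟩ _ ⟨g, hg, rfl⟩
    exact (mIntersect_iff_msupport_inter_nonempty f g).mp (h𝓐int f hf g hg)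
  obtain ⟨ℬ, hℬ, h𝓐ℬ⟩ :=
    exists_maximalIntersecting_superset (by rintro _ ⟨f, hf, rfl⟩; exact hsupp f hf) hsuppint
  have hmem : ∀ f ∈ 𝓐, msupport f ∈ ℬ := fun f hf => h𝓐ℬ ⟨f, hf, rfl⟩
  refine ⟨ℬ, hℬ, hmem, fun f => ⟨fun hf => ⟨h𝓐k f hf, hmem f hf⟩, ?_⟩⟩
  rintro ⟨hfk, hfℬ⟩
  by_contra hf𝓐
  obtain ⟨g, hg, hfg⟩ := h𝓐max f hfk hf𝓐
  exact hfg ((mIntersect_iff_msupport_inter_nonempty f g).mpr (hℬ.2.1 _ hfℬ _ (hmem g hg)))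
end
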